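/- arXiv:2509.01115 — 6 statements merged into one kernel-verified Lean document; each statement's English description precedes it below -/
import Mathlib

section
/- Let M be a set equipped with two metrics d and θ, and let η : [0,∞) → [0,∞) be a homeomorphism with η(0)=0 such that θ(x,y)/θ(x,z) ≤ η(d(x,y)/d(x,z)) for all x,y,z ∈ M with x ≠ z (i.e. d and θ are η-quasisymmetric). Assume (M,d) is K-uniformly perfect for some K ∈ (1,∞). Let N ⊆ M and let T : M × Set M → [0,∞] be monotone in its second argument, i.e. T(y,U) ≤ T(y,U') whenever U ⊆ U'. If T satisfies condition (E_M) with respect to d with exceptional set N, then T satisfies condition (E_M) with respect to θ with the same exceptional set N. -/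
/-!
A θ-ball `B_θ(x,r)` is compared with a d-ball through a point `z` with `r ≤ θ(x,z) < L r`,
where `L = max (η K², 1)`. Such a point exists because uniform perfectness yields points
`w₀, w₁, …` whose d-distances to `x` drop by factors in `(K, K²]`; by quasisymmetry their
θ-distances tend to `0` while dropping by factors at most `L`, so one of them lands in
`[r, L r)`. With `η δ = 1`, quasisymmetry then gives `B_θ(x,r) ⊆ B_d(x,s)` and
`B_d(x,As) ⊆ B_θ(x, η(A/δ) L r)` for `s = d(x,z)/δ`. Since `r` is small against `diam_θ`, some
`u` has `θ(x,u) ≫ θ(x,z)`, hence `d(x,u) ≫ d(x,z)` by quasisymmetry, which keeps `s` below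
`σ · diam_d`. Monotonicity of `T` transports (E_M) through this sandwich.
-/

open Set

/-- Open ball for an abstract distance function `ρ`. -/
def ballOf {M : Type*} (ρ : M → M → ℝ) (x : M) (r : ℝ) : Set M :=
  {y | ρ x y < r}

/-- Diameter (in `[0,∞]`) of `M` under an abstract distance function `ρ`. -/
noncomputable def diamOf {M : Type*} (ρ : M → M → ℝ) : ENNReal :=
  ⨆ x : M, ⨆ y : M, ENNReal.ofReal (ρ x y)

/-- Condition (E_M) for an abstract exit-time functional `T` with respect to the
distance `ρ` and the exceptional set `N`: there exist `C > 0`, `A > 1` and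
`σ ∈ (0,1)` such that for all `x ∈ M \ N` and all radii `r ∈ (0, σ·diam_ρ(M))`,
`C · sup_{y ∈ B_ρ(x,r) \ N} T(y, B_ρ(x,r)) ≤ T(x, B_ρ(x,Ar))`. -/
def CondEM {M : Type*} (ρ : M → M → ℝ) (N : Set M) (T : M → Set M → ENNReal) : Prop :=
  ∃ C A σ : ℝ, 0 < C ∧ 1 < A ∧ 0 < σ ∧ σ < 1 ∧
    ∀ x, x ∉ N → ∀ r : ℝ, 0 < r →
      ENNReal.ofReal r < ENNReal.ofReal σ * diamOf ρ →
      ENNReal.ofReal C * (⨆ y ∈ ballOf ρ x r \ N, T y (ballOf ρ x r)) ≤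
        T x (ballOf ρ x (A * r))

theorem ofReal_div_lt_of_lt_ofReal_mul {c r : ℝ} {D : ENNReal} (hc : 0 < c)
    (h : ENNReal.ofReal r < ENNReal.ofReal c * D) : ENNReal.ofReal (r / c) < D := by
  refine lt_of_not_ge fun hD => h.not_ge ?_
  calc ENNReal.ofReal c * D ≤ ENNReal.ofReal c * ENNReal.ofReal (r / c) := by gcongr
    _ = ENNReal.ofReal r := by rw [← ENNReal.ofReal_mul hc.le, mul_div_cancel₀ r hc.ne']

theorem exists_mem_Ico_of_le_mul_succ {α : Type*} [Semiring α] [LinearOrder α]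
    [IsStrictOrderedRing α] {a : ℕ → α} {L r : α} (hL : 0 < L) (h0 : L * r ≤ a 0)
    (hsmall : ∃ n, a n < L * r) (hstep : ∀ n, a n ≤ L * a (n + 1)) :
    ∃ n, a n ∈ Ico r (L * r) := by
  classical
  obtain ⟨m, hm⟩ : ∃ m, Nat.find hsmall = m + 1 :=
    Nat.exists_eq_succ_of_ne_zero fun h => (h ▸ Nat.find_spec hsmall).not_ge h0
  refine ⟨Nat.find hsmall, ?_, Nat.find_spec hsmall⟩
  have hprev : L * r ≤ a m := not_lt.1 (Nat.find_min hsmall (by omega))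
  exact le_of_mul_le_mul_left (hprev.trans (hm ▸ hstep m)) hL

section Distance

variable {M : Type*}

theorem ballOf_subset_ballOf {ρ : M → M → ℝ} {x : M} {r r' : ℝ} (h : r ≤ r') :
    ballOf ρ x r ⊆ ballOf ρ x r' :=
  fun _ hy => lt_of_lt_of_le hy h

theorem ofReal_mul_le_mul_diamOf (ρ : M → M → ℝ) {c : ℝ} (hc : 0 ≤ c) (x y : M) :
    ENNReal.ofReal (c * ρ x y) ≤ ENNReal.ofReal c * diamOf ρ := by
  rw [ENNReal.ofReal_mul hc]
  gcongr
  exact le_iSup₂ (f := fun a b => ENNReal.ofReal (ρ a b)) x y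

structure IsMetric (ρ : M → M → ℝ) : Prop where
  self : ∀ x, ρ x x = 0
  symm : ∀ x y, ρ x y = ρ y x
  triangle : ∀ x y z, ρ x z ≤ ρ x y + ρ y z
  eq_of_eq_zero : ∀ x y, ρ x y = 0 → x = y

namespace IsMetric

variable {ρ : M → M → ℝ}

theorem nonneg (hρ : IsMetric ρ) (x y : M) : 0 ≤ ρ x y := by
  linarith [hρ.triangle x y x, hρ.self x, hρ.symm y x]

theorem pos_of_ne (hρ : IsMetric ρ) {x y : M} (hxy : x ≠ y) : 0 < ρ x y :=
  (hρ.nonneg x y).lt_of_ne fun h => hxy (hρ.eq_of_eq_zero x y h.symm)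

theorem ne_of_pos (hρ : IsMetric ρ) {x y : M} (hxy : 0 < ρ x y) : x ≠ y := by
  rintro rfl
  exact hxy.ne' (hρ.self x)

theorem exists_lt_two_mul_of_ofReal_lt_diamOf (hρ : IsMetric ρ) {t : ℝ}
    (ht : ENNReal.ofReal t < diamOf ρ) (x : M) : ∃ u, t < 2 * ρ x u := by
  by_contra! hnear
  refine ht.not_ge (iSup₂_le fun p q => ENNReal.ofReal_le_ofReal ?_)
  linarith [hρ.triangle p x q, hρ.symm p x, hnear p, hnear q]

end IsMetric

def UniformlyPerfect (d : M → M → ℝ) (K : ℝ) : Prop :=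
  ∀ x : M, ∀ r : ℝ, 0 < r → ((ballOf d x r)ᶜ).Nonempty →
    (ballOf d x r \ ballOf d x (r / K)).Nonempty

theorem UniformlyPerfect.exists_descending_seq {d : M → M → ℝ} {K : ℝ}
    (hUP : UniformlyPerfect d K) (hK : 1 < K) {x u : M} (hu : 0 < d x u) :
    ∃ w : ℕ → M, w 0 = u ∧ ∀ n, 0 < d x (w n) ∧
      d x (w n) ≤ K ^ 2 * d x (w (n + 1)) ∧ K * d x (w (n + 1)) < d x (w n) := by
  have hK0 : 0 < K := zero_lt_one.trans hK
  have step : ∀ v, 0 < d x v →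
      ∃ v', d x v ≤ K ^ 2 * d x v' ∧ K * d x v' < d x v := by
    intro v hv
    obtain ⟨v', hlt, hge⟩ :=
      hUP x (d x v / K) (by positivity) ⟨v, (div_le_self hv.le hK.le).not_gt⟩
    refine ⟨v', ?_, (lt_div_iff₀' hK0).1 hlt⟩
    rw [sq, ← div_le_iff₀' (by positivity), ← div_div]
    exact not_lt.1 hge
  choose! f hf using step
  have hpos : ∀ n, 0 < d x (f^[n] u) := by
    intro n
    induction n with
    | zero => exact hu
    | succ n ih =>
      rw [Function.iterate_succ_apply']
      exact pos_of_mul_pos_right (ih.trans_le (hf _ ih).1) (by positivity)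
  refine ⟨fun n => f^[n] u, rfl, fun n => ⟨hpos n, ?_⟩⟩
  simp only [Function.iterate_succ_apply']
  exact hf _ (hpos n)

end Distance

structure IsDistortion (η : ℝ → ℝ) : Prop where
  map_zero : η 0 = 0
  strictMonoOn : StrictMonoOn η (Ici 0)
  surj : ∀ y : ℝ, 0 ≤ y → ∃ t : ℝ, 0 ≤ t ∧ η t = y

namespace IsDistortion

variable {η : ℝ → ℝ}

theorem mono (hη : IsDistortion η) {a b : ℝ} (ha : 0 ≤ a) (hab : a ≤ b) : η a ≤ η b :=
  hη.strictMonoOn.monotoneOn ha (ha.trans hab) hab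

theorem nonneg (hη : IsDistortion η) {t : ℝ} (ht : 0 ≤ t) : 0 ≤ η t :=
  hη.map_zero ▸ hη.mono le_rfl ht

theorem pos (hη : IsDistortion η) {t : ℝ} (ht : 0 < t) : 0 < η t :=
  hη.map_zero ▸ hη.strictMonoOn (le_refl (0 : ℝ)) ht.le ht

theorem exists_pos_eq (hη : IsDistortion η) {y : ℝ} (hy : 0 < y) :
    ∃ t, 0 < t ∧ η t = y := by
  obtain ⟨t, ht, rfl⟩ := hη.surj y hy.le
  refine ⟨t, ht.lt_of_ne ?_, rfl⟩
  rintro rfl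
  exact hy.ne' hη.map_zero

end IsDistortion

section Quasisymmetry

variable {M : Type*} {d θ : M → M → ℝ} {η : ℝ → ℝ}

def IsQuasisymmetric (d θ : M → M → ℝ) (η : ℝ → ℝ) : Prop :=
  ∀ x y z : M, x ≠ z → θ x y / θ x z ≤ η (d x y / d x z)

namespace IsQuasisymmetric

theorem le_mul (hQS : IsQuasisymmetric d θ η) (hθ : IsMetric θ) {x z : M} (hxz : x ≠ z)
    (y : M) : θ x y ≤ η (d x y / d x z) * θ x z :=
  (div_le_iff₀ (hθ.pos_of_ne hxz)).1 (hQS x y z hxz)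

theorem ballOf_mul_subset (hQS : IsQuasisymmetric d θ η) (hd : IsMetric d) (hθ : IsMetric θ)
    (hη : IsDistortion η) {x z : M} (hxz : x ≠ z) (a : ℝ) :
    ballOf d x (a * d x z) ⊆ ballOf θ x (η a * θ x z) := by
  intro y hy
  have hratio : d x y / d x z < a := (div_lt_iff₀ (hd.pos_of_ne hxz)).2 hy
  have hratio_nonneg : 0 ≤ d x y / d x z := div_nonneg (hd.nonneg x y) (hd.nonneg x z)
  calc θ x y ≤ η (d x y / d x z) * θ x z := hQS.le_mul hθ hxz y
    _ < η a * θ x z := mul_lt_mul_of_pos_right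
        (hη.strictMonoOn hratio_nonneg (hratio_nonneg.trans hratio.le) hratio)
        (hθ.pos_of_ne hxz)

theorem lt_div_of_mul_lt (hQS : IsQuasisymmetric d θ η) (hd : IsMetric d) (hθ : IsMetric θ)
    (hη : IsDistortion η) {a : ℝ} (ha : 0 < a) {x y z : M} (hxz : x ≠ z)
    (h : η a * θ x y < θ x z) : d x y < d x z / a := by
  rcases eq_or_ne x y with rfl | hxy
  · rw [hd.self]
    exact div_pos (hd.pos_of_ne hxz) ha
  refine lt_of_not_ge fun hge => h.not_ge ?_
  have hratio : d x z / d x y ≤ a :=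
    (div_le_iff₀ (hd.pos_of_ne hxy)).2 (by rw [mul_comm]; exact (div_le_iff₀ ha).1 hge)
  calc θ x z ≤ η (d x z / d x y) * θ x y := hQS.le_mul hθ hxy z
    _ ≤ η a * θ x y := mul_le_mul_of_nonneg_right
        (hη.mono (div_nonneg (hd.nonneg x z) (hd.nonneg x y)) hratio) (hθ.nonneg x y)

theorem ballOf_div_subset (hQS : IsQuasisymmetric d θ η) (hd : IsMetric d) (hθ : IsMetric θ)
    (hη : IsDistortion η) {a : ℝ} (ha : 0 < a) {x z : M} (hxz : x ≠ z) :
    ballOf θ x (θ x z / η a) ⊆ ballOf d x (d x z / a) :=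
  fun _ hy => hQS.lt_div_of_mul_lt hd hθ hη ha hxz ((lt_div_iff₀' (hη.pos ha)).1 hy)

end IsQuasisymmetric

end Quasisymmetry

section Comparison

variable {M : Type*} {d θ : M → M → ℝ} {η : ℝ → ℝ}

theorem exists_mem_annulus (hd : IsMetric d) (hθ : IsMetric θ) (hη : IsDistortion η)
    (hQS : IsQuasisymmetric d θ η) {K : ℝ} (hK : 1 < K) (hUP : UniformlyPerfect d K)
    {x u : M} {r : ℝ} (hr : 0 < r) (hu : max (η (K ^ 2)) 1 * r ≤ θ x u) :
    ∃ z, θ x z ∈ Ico r (max (η (K ^ 2)) 1 * r) := by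
  set L := max (η (K ^ 2)) 1
  have hL : 0 < L := zero_lt_one.trans_le (le_max_right _ _)
  have hθu : 0 < θ x u := (mul_pos hL hr).trans_le hu
  obtain ⟨w, rfl, hw⟩ := hUP.exists_descending_seq hK (hd.pos_of_ne (hθ.ne_of_pos hθu))
  have hxw : ∀ n, x ≠ w n := fun n => hd.ne_of_pos (hw n).1
  have hdecay : ∀ n, K ^ n * d x (w n) ≤ d x (w 0) := by
    intro n
    induction n with
    | zero => simp
    | succ n ih =>
      calc K ^ (n + 1) * d x (w (n + 1)) = K ^ n * (K * d x (w (n + 1))) := by ring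
        _ ≤ K ^ n * d x (w n) := by gcongr; exact (hw n).2.2.le
        _ ≤ d x (w 0) := ih
  have hstep : ∀ n, θ x (w n) ≤ L * θ x (w (n + 1)) := by
    intro n
    have hratio : d x (w n) / d x (w (n + 1)) ≤ K ^ 2 :=
      (div_le_iff₀ (hw (n + 1)).1).2 (hw n).2.1
    calc θ x (w n) ≤ η (d x (w n) / d x (w (n + 1))) * θ x (w (n + 1)) :=
          hQS.le_mul hθ (hxw _) _
      _ ≤ L * θ x (w (n + 1)) := mul_le_mul_of_nonneg_right
          ((hη.mono (div_nonneg (hd.nonneg _ _) (hd.nonneg _ _)) hratio).trans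
            (le_max_left _ _)) (hθ.nonneg _ _)
  have hsmall : ∃ n, θ x (w n) < L * r := by
    obtain ⟨t, ht, hηt⟩ := hη.exists_pos_eq (div_pos (mul_pos hL hr) hθu)
    obtain ⟨n, hn⟩ := pow_unbounded_of_one_lt t⁻¹ hK
    have hratio : d x (w n) / d x (w 0) < t := by
      refine (div_lt_iff₀ (hw 0).1).2 ?_
      calc d x (w n) < K ^ n * t * d x (w n) :=
            lt_mul_of_one_lt_left (hw n).1 ((inv_lt_iff_one_lt_mul₀ ht).1 hn)
        _ ≤ t * d x (w 0) := by rw [mul_comm (K ^ n), mul_assoc]; gcongr; exact hdecay n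
    refine ⟨n, ?_⟩
    calc θ x (w n) ≤ η (d x (w n) / d x (w 0)) * θ x (w 0) := hQS.le_mul hθ (hxw 0) _
      _ < η t * θ x (w 0) := mul_lt_mul_of_pos_right
          (hη.strictMonoOn (div_nonneg (hd.nonneg _ _) (hd.nonneg _ _)) ht.le hratio) hθu
      _ = L * r := by rw [hηt, div_mul_cancel₀ _ hθu.ne']
  obtain ⟨n, hn⟩ := exists_mem_Ico_of_le_mul_succ hL hu hsmall hstep
  exact ⟨w n, hn⟩

theorem exists_ballOf_comparison (hd : IsMetric d) (hθ : IsMetric θ) (hη : IsDistortion η)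
    (hQS : IsQuasisymmetric d θ η) {K : ℝ} (hK : 1 < K) (hUP : UniformlyPerfect d K)
    {σ A : ℝ} (hσ : 0 < σ) (hA : 0 ≤ A) :
    ∃ σ' A' : ℝ, 0 < σ' ∧ σ' < 1 ∧ 1 < A' ∧ ∀ x r, 0 < r →
      ENNReal.ofReal r < ENNReal.ofReal σ' * diamOf θ →
      ∃ s, 0 < s ∧ ENNReal.ofReal s < ENNReal.ofReal σ * diamOf d ∧
        ballOf θ x r ⊆ ballOf d x s ∧ ballOf d x (A * s) ⊆ ballOf θ x (A' * r) := by
  obtain ⟨δ, hδ, hηδ⟩ := hη.exists_pos_eq one_pos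
  set L := max (η (K ^ 2)) 1
  set L' := max (η (σ * δ)⁻¹) 1
  have hL : 1 ≤ L := le_max_right _ _
  have hL' : 1 ≤ L' := le_max_right _ _
  refine ⟨(2 * (L * L'))⁻¹, max (η (A / δ) * L) 2, by positivity,
    inv_lt_one_of_one_lt₀ (by nlinarith), lt_max_of_lt_right one_lt_two,
    fun x r hr hrθ => ?_⟩
  obtain ⟨u, hu⟩ := hθ.exists_lt_two_mul_of_ofReal_lt_diamOf
    (ofReal_div_lt_of_lt_ofReal_mul (by positivity) hrθ) x
  replace hu : L * L' * r < θ x u := by rw [div_inv_eq_mul] at hu; linarith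
  have hLu : L * r ≤ θ x u := by
    linarith [mul_le_mul_of_nonneg_left hL' (by positivity : 0 ≤ L * r)]
  obtain ⟨z, hrz, hzL⟩ := exists_mem_annulus hd hθ hη hQS hK hUP hr hLu
  have hxz : x ≠ z := hθ.ne_of_pos (hr.trans_le hrz)
  have hxu : x ≠ u := hθ.ne_of_pos ((by positivity : 0 < L * L' * r).trans hu)
  refine ⟨d x z / δ, div_pos (hd.pos_of_ne hxz) hδ, ?_, ?_, ?_⟩
  · have hdz : d x z < d x u / (σ * δ)⁻¹ := by
      refine hQS.lt_div_of_mul_lt hd hθ hη (by positivity) hxu ?_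
      calc η (σ * δ)⁻¹ * θ x z ≤ L' * θ x z :=
            mul_le_mul_of_nonneg_right (le_max_left _ _) (hθ.nonneg x z)
        _ < L' * (L * r) := mul_lt_mul_of_pos_left hzL (by positivity)
        _ = L * L' * r := by ring
        _ < θ x u := hu
    rw [div_inv_eq_mul] at hdz
    calc ENNReal.ofReal (d x z / δ) < ENNReal.ofReal (σ * d x u) :=
          (ENNReal.ofReal_lt_ofReal_iff (mul_pos hσ (hd.pos_of_ne hxu))).2
            ((div_lt_iff₀ hδ).2 (by linarith))
      _ ≤ ENNReal.ofReal σ * diamOf d := ofReal_mul_le_mul_diamOf d hσ.le x u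
  · refine (ballOf_subset_ballOf ?_).trans (hQS.ballOf_div_subset hd hθ hη hδ hxz)
    rwa [hηδ, div_one]
  · rw [show A * (d x z / δ) = A / δ * d x z by ring]
    refine (hQS.ballOf_mul_subset hd hθ hη hxz _).trans (ballOf_subset_ballOf ?_)
    calc η (A / δ) * θ x z ≤ η (A / δ) * L * r := by
          rw [mul_assoc]; exact mul_le_mul_of_nonneg_left hzL.le (hη.nonneg (by positivity))
      _ ≤ max (η (A / δ) * L) 2 * r := mul_le_mul_of_nonneg_right (le_max_left _ _) hr.le

end Comparison

theorem mul_iSup_le_of_subset {M : Type*} {T : M → Set M → ENNReal}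
    (hT : ∀ y U U', U ⊆ U' → T y U ≤ T y U') {N U V W W' : Set M} {x : M} {c : ENNReal}
    (hUV : U ⊆ V) (hWW' : W ⊆ W') (h : c * ⨆ y ∈ V \ N, T y V ≤ T x W) :
    c * ⨆ y ∈ U \ N, T y U ≤ T x W' := by
  have hsup : ⨆ y ∈ U \ N, T y U ≤ ⨆ y ∈ V \ N, T y V :=
    iSup₂_le fun y hy =>
      le_iSup₂_of_le (f := fun y _ => T y V) y ⟨hUV hy.1, hy.2⟩ (hT y U V hUV)
  exact (mul_le_mul_right hsup c).trans (h.trans (hT x W W' hWW'))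

/-- Condition (E_M) is invariant under quasi-symmetric changes of metric on
uniformly perfect spaces. -/
theorem em_invariant_under_quasisymmetry {M : Type*} (d θ : M → M → ℝ)
    -- `d` is a metric on `M`
    (hd_self : ∀ x, d x x = 0) (hd_symm : ∀ x y, d x y = d y x)
    (hd_tri : ∀ x y z, d x z ≤ d x y + d y z)
    (hd_eq : ∀ x y, d x y = 0 → x = y)
    -- `θ` is a metric on `M`
    (hθ_self : ∀ x, θ x x = 0) (hθ_symm : ∀ x y, θ x y = θ y x)
    (hθ_tri : ∀ x y z, θ x z ≤ θ x y + θ y z)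
    (hθ_eq : ∀ x y, θ x y = 0 → x = y)
    -- `η : [0,∞) → [0,∞)` is a homeomorphism with `η(0) = 0`
    (η : ℝ → ℝ) (hη0 : η 0 = 0)
    (hη_mono : StrictMonoOn η (Ici 0))
    (hη_surj : ∀ y : ℝ, 0 ≤ y → ∃ t : ℝ, 0 ≤ t ∧ η t = y)
    -- `θ` and `d` are `η`-quasisymmetric
    (hQS : ∀ x y z : M, x ≠ z → θ x y / θ x z ≤ η (d x y / d x z))
    -- `(M,d)` is `K`-uniformly perfect for some `K ∈ (1,∞)`
    (K : ℝ) (hK : 1 < K)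
    (hUP : ∀ x : M, ∀ r : ℝ, 0 < r → ((ballOf d x r)ᶜ).Nonempty →
      (ballOf d x r \ ballOf d x (r / K)).Nonempty)
    -- the exceptional set and the monotone exit-time functional
    (N : Set M) (T : M → Set M → ENNReal)
    (hT_mono : ∀ y : M, ∀ U U' : Set M, U ⊆ U' → T y U ≤ T y U')
    -- (E_M) holds with respect to `d`
    (hEM : CondEM d N T) :
    CondEM θ N T := by
  have hd : IsMetric d := ⟨hd_self, hd_symm, hd_tri, hd_eq⟩
  have hθ : IsMetric θ := ⟨hθ_self, hθ_symm, hθ_tri, hθ_eq⟩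
  have hη : IsDistortion η := ⟨hη0, hη_mono, hη_surj⟩
  obtain ⟨C, A, σ, hC, hA, hσ, -, hEMd⟩ := hEM
  obtain ⟨σ', A', hσ', hσ'1, hA', hcomp⟩ :=
    exists_ballOf_comparison hd hθ hη hQS hK hUP hσ (zero_le_one.trans hA.le)
  refine ⟨C, A', σ', hC, hA', hσ', hσ'1, fun x hx r hr hrθ => ?_⟩
  obtain ⟨s, hs, hsd, hθd, hdθ⟩ := hcomp x r hr hrθ
  exact mul_iSup_le_of_subset hT_mono hθd hdθ (hEMd x hx s hs hsd)
end

section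
/- Let (M,d) be a metric space with diameter R̄ ∈ (0,∞] and let W be a scale function on (M,d) with constants C_W ≥ 1 and 0 < β₁ ≤ β₂. Let N ⊆ M, let T : M × Set M → [0,∞], let λ : M × (0,∞) → [0,∞), and assume there exist constants A > 1, σ ∈ (0,1), C_M > 0 and C_λ > 0 such that: (i) 1 ≤ λ(x,r) · sup_{y ∈ B(x,r) \ N} T(y, B(x,r)) for all x ∈ M \ N and r ∈ (0, σR̄/A); (ii) λ(x,r) ≤ C_λ / W(x,r) for all x ∈ M and r ∈ (0, σR̄); (iii) C_M · sup_{y ∈ B(x,r) \ N} T(y, B(x,r)) ≤ T(x, B(x,Ar)) for all x ∈ M \ N and r ∈ (0, σR̄/A). Then there exists a constant c > 0, depending only on A, σ, C_M, C_λ, C_W and β₂, such that T(x, B(x,r)) ≥ c·W(x,r) for all x ∈ M \ N and all r ∈ (0, σR̄). -/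
open Set Metric

/-!
Fix `x ∉ N` and `r < σR̄`, and put `s = r / A < σR̄ / A`. Combining (i) with (ii) gives
`sup_{B(x,s)∖N} T(·, B(x,s)) ≥ W(x,s) / C_λ`, and (iii) carries this to
`T(x, B(x,r)) ≥ C_M W(x,s) / C_λ`. The upper scaling bound `W(x,r) ≤ C_W A^{β₂} W(x,s)` then
yields the claim with `c = C_M / (C_λ C_W A^{β₂})`.
-/

namespace ENNReal

theorem ofReal_div_lt_div_ofReal {a A : ℝ} {b : ℝ≥0∞} (hA : 0 < A)
    (h : ENNReal.ofReal a < b) : ENNReal.ofReal (a / A) < b / ENNReal.ofReal A := by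
  rw [ofReal_div_of_pos hA]
  exact ENNReal.div_lt_div_right (by simpa using hA) ofReal_ne_top h

variable {l C w : ℝ} {S : ℝ≥0∞}

theorem pos_of_one_le_ofReal_mul_of_le_div (hC : 0 < C) (h1 : 1 ≤ ENNReal.ofReal l * S)
    (hl : l ≤ C / w) : 0 < w := by
  by_contra! hw
  have hl0 : ENNReal.ofReal l = 0 :=
    ofReal_eq_zero.2 (hl.trans (div_nonpos_of_nonneg_of_nonpos hC.le hw))
  simp [hl0] at h1

theorem ofReal_div_le_of_one_le_ofReal_mul_of_le_div (hC : 0 < C)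
    (h1 : 1 ≤ ENNReal.ofReal l * S) (hl : l ≤ C / w) : ENNReal.ofReal (w / C) ≤ S := by
  have hw := pos_of_one_le_ofReal_mul_of_le_div hC h1 hl
  have hCw : 0 < C / w := div_pos hC hw
  rw [← inv_div, ofReal_inv_of_pos hCw,
    inv_le_iff_le_mul (fun _ => by simpa using hCw) (fun h => absurd h ofReal_ne_top)]
  exact h1.trans (mul_le_mul_left (ofReal_le_ofReal hl) S)

end ENNReal

theorem lambda_em_implies_e_lower_general {M : Type*} [MetricSpace M]
    -- `W` is a scale function with constants `C_W ≥ 1`, `0 < β₁ ≤ β₂`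
    (W : M → ℝ → ℝ) (C_W β₁ β₂ : ℝ)
    (hCW : 1 ≤ C_W)
    (hWscale : ∀ x y : M, ∀ r R : ℝ, 0 < r → r ≤ R → dist x y ≤ R →
      C_W⁻¹ * (R / r) ^ β₁ ≤ W x R / W y r ∧ W x R / W y r ≤ C_W * (R / r) ^ β₂)
    -- the exceptional set, exit-time functional, eigenvalue function and constants
    (N : Set M) (T : M → Set M → ENNReal) (lam : M → ℝ → ℝ)
    (A σ C_M C_lam : ℝ)
    (hA : 1 < A) (hCM : 0 < C_M) (hClam : 0 < C_lam)
    -- (i) `1 ≤ λ(x,r) · sup_{y ∈ B(x,r)∖N} T(y,B(x,r))` for `r ∈ (0, σR̄/A)`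
    (hi : ∀ x, x ∉ N → ∀ r : ℝ, 0 < r →
      ENNReal.ofReal r < ENNReal.ofReal σ * EMetric.diam (Set.univ : Set M) /
        ENNReal.ofReal A →
      1 ≤ ENNReal.ofReal (lam x r) * ⨆ y ∈ Metric.ball x r \ N, T y (Metric.ball x r))
    -- (ii) `λ(x,r) ≤ C_λ / W(x,r)` for `r ∈ (0, σR̄)`
    (hii : ∀ x : M, ∀ r : ℝ, 0 < r →
      ENNReal.ofReal r < ENNReal.ofReal σ * EMetric.diam (Set.univ : Set M) →
      lam x r ≤ C_lam / W x r)
    -- (iii) condition (E_M) for `r ∈ (0, σR̄/A)`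
    (hiii : ∀ x, x ∉ N → ∀ r : ℝ, 0 < r →
      ENNReal.ofReal r < ENNReal.ofReal σ * EMetric.diam (Set.univ : Set M) /
        ENNReal.ofReal A →
      ENNReal.ofReal C_M * (⨆ y ∈ Metric.ball x r \ N, T y (Metric.ball x r)) ≤
        T x (Metric.ball x (A * r))) :
    ∃ c : ℝ, 0 < c ∧ ∀ x, x ∉ N → ∀ r : ℝ, 0 < r →
      ENNReal.ofReal r < ENNReal.ofReal σ * EMetric.diam (Set.univ : Set M) →
      ENNReal.ofReal (c * W x r) ≤ T x (Metric.ball x r) := by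
  have hA0 : 0 < A := one_pos.trans hA
  have hCW0 : 0 < C_W := one_pos.trans_le hCW
  refine ⟨C_M / (C_lam * C_W * A ^ β₂), by positivity, fun x hx r hr hrR => ?_⟩
  set s := r / A
  have hs : 0 < s := div_pos hr hA0
  have hsR : ENNReal.ofReal s < _ := ENNReal.ofReal_div_lt_div_ofReal hA0 hrR
  have hsr : s ≤ r := div_le_self hr.le hA.le
  have hlam := hii x s hs ((ENNReal.ofReal_le_ofReal hsr).trans_lt hrR)
  have heig := hi x hx s hs hsR
  have hWs := ENNReal.pos_of_one_le_ofReal_mul_of_le_div hClam heig hlam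
  have hsup := ENNReal.ofReal_div_le_of_one_le_ofReal_mul_of_le_div hClam heig hlam
  have hEM := hiii x hx s hs hsR
  rw [mul_div_cancel₀ r hA0.ne'] at hEM
  have hWr : W x r ≤ C_W * A ^ β₂ * W x s := by
    have h := (hWscale x x s r hs hsr (by simpa using hr.le)).2
    rwa [div_div_cancel₀ hr.ne', div_le_iff₀ hWs] at h
  calc ENNReal.ofReal (C_M / (C_lam * C_W * A ^ β₂) * W x r)
      ≤ ENNReal.ofReal (C_M * (W x s / C_lam)) := by
        refine ENNReal.ofReal_le_ofReal ?_
        calc _ ≤ C_M / (C_lam * C_W * A ^ β₂) * (C_W * A ^ β₂ * W x s) := by gcongr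
          _ = C_M * (W x s / C_lam) := by field_simp
    _ = ENNReal.ofReal C_M * ENNReal.ofReal (W x s / C_lam) := ENNReal.ofReal_mul hCM.le
    _ ≤ ENNReal.ofReal C_M * ⨆ y ∈ ball x s \ N, T y (ball x s) := by gcongr
    _ ≤ T x (ball x r) := hEM

/-- Conditions (λ_≤) and (E_M) (together with the eigenvalue–exit time inequality
`1 ≤ λ(B) · sup_B E[τ_B]`) imply the lower mean exit time estimate (E_≥). -/
theorem lambda_em_implies_e_lower {M : Type*} [MetricSpace M]
    -- diameter `R̄ ∈ (0,∞]`
    (hdiam_pos : 0 < EMetric.diam (Set.univ : Set M))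
    -- `W` is a scale function with constants `C_W ≥ 1`, `0 < β₁ ≤ β₂`
    (W : M → ℝ → ℝ) (C_W β₁ β₂ : ℝ)
    (hCW : 1 ≤ C_W) (hβ₁ : 0 < β₁) (hβ₁₂ : β₁ ≤ β₂)
    (hW0 : ∀ x, W x 0 = 0)
    (hWmono : ∀ x, StrictMonoOn (W x) (Set.Ici 0))
    (hWsurj : ∀ x : M, ∀ y : ℝ, 0 ≤ y → ∃ r : ℝ, 0 ≤ r ∧ W x r = y)
    (hWscale : ∀ x y : M, ∀ r R : ℝ, 0 < r → r ≤ R → dist x y ≤ R →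
      C_W⁻¹ * (R / r) ^ β₁ ≤ W x R / W y r ∧ W x R / W y r ≤ C_W * (R / r) ^ β₂)
    -- the exceptional set, exit-time functional, eigenvalue function and constants
    (N : Set M) (T : M → Set M → ENNReal) (lam : M → ℝ → ℝ)
    (hlam_nonneg : ∀ x : M, ∀ r : ℝ, 0 < r → 0 ≤ lam x r)
    (A σ C_M C_lam : ℝ)
    (hA : 1 < A) (hσ : σ ∈ Set.Ioo (0 : ℝ) 1) (hCM : 0 < C_M) (hClam : 0 < C_lam)
    -- (i) `1 ≤ λ(x,r) · sup_{y ∈ B(x,r)∖N} T(y,B(x,r))` for `r ∈ (0, σR̄/A)`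
    (hi : ∀ x, x ∉ N → ∀ r : ℝ, 0 < r →
      ENNReal.ofReal r < ENNReal.ofReal σ * EMetric.diam (Set.univ : Set M) /
        ENNReal.ofReal A →
      1 ≤ ENNReal.ofReal (lam x r) * ⨆ y ∈ Metric.ball x r \ N, T y (Metric.ball x r))
    -- (ii) `λ(x,r) ≤ C_λ / W(x,r)` for `r ∈ (0, σR̄)`
    (hii : ∀ x : M, ∀ r : ℝ, 0 < r →
      ENNReal.ofReal r < ENNReal.ofReal σ * EMetric.diam (Set.univ : Set M) →
      lam x r ≤ C_lam / W x r)
    -- (iii) condition (E_M) for `r ∈ (0, σR̄/A)`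
    (hiii : ∀ x, x ∉ N → ∀ r : ℝ, 0 < r →
      ENNReal.ofReal r < ENNReal.ofReal σ * EMetric.diam (Set.univ : Set M) /
        ENNReal.ofReal A →
      ENNReal.ofReal C_M * (⨆ y ∈ Metric.ball x r \ N, T y (Metric.ball x r)) ≤
        T x (Metric.ball x (A * r))) :
    ∃ c : ℝ, 0 < c ∧ ∀ x, x ∉ N → ∀ r : ℝ, 0 < r →
      ENNReal.ofReal r < ENNReal.ofReal σ * EMetric.diam (Set.univ : Set M) →
      ENNReal.ofReal (c * W x r) ≤ T x (Metric.ball x r) :=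
  lambda_em_implies_e_lower_general W C_W β₁ β₂ hCW hWscale N T lam A σ C_M C_lam hA hCM hClam hi
    hii hiii
end

section
/- Let (M,d,μ) be a metric measure space with finite diameter R̄ := diam(M) ∈ (0,∞), where μ has full support and satisfies the volume doubling property with constant C_VD ∈ (1,∞). Let W be a scale function on (M,d) with constants C_W ≥ 1 and 0 < β₁ ≤ β₂, and set T₀ := inf_{x∈M} W(x,R̄). Let p : (0,∞) × M × M → [0,∞) be jointly measurable, symmetric (p_t(x,y) = p_t(y,x)), satisfy the semigroup property p_{s+t}(x,y) = ∫_M p_s(x,z)·p_t(z,y) μ(dz), satisfy the sub-Markov property ∫_M p_t(x,y) μ(dy) ≤ 1, and satisfy p_t(x,y) ≤ C₀ / ( √V(x,W^{-1}(x,t)) · √V(y,W^{-1}(y,t)) ) for all x,y ∈ M and all 0 < t ≤ T₀. Then there exists a constant C > 0, depending only on C₀, C_VD, C_W, β₁ and β₂, such that for every x ∈ M and every t ≥ T₀: ∫_E p_t(x,y) μ(dy) ≤ C·μ(E)/V(x,R̄) for every measurable set E ⊆ M, and consequently p_t(x,y) ≤ C/V(x,R̄) for μ-almost every y ∈ M.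 -/
/-!
Let `R̄` be the diameter. The scale inequalities give `W(x,R̄) ≤ C_W T₀` for every `x`, so at the
time `s = T₀/2` every radius `W⁻¹(z,s)` is at least `R̄/D` with `D = (2 C_W²)^(1/β₁)`. Since every
ball of radius `2R̄` is all of `M`, doubling gives `V(x,R̄) ≤ C_VD^(n+1) V(z,W⁻¹(z,s))` for all `z`
once `2ⁿ ≥ D`, and the near-diagonal estimate at time `s` becomes the bound
`p_s(x,z) ≤ C₀ C_VD^(n+1) / V(x,R̄)`, uniform in `z`. For `t ≥ T₀` the semigroup property writes
`p_t(x,y) = ∫ p_s(x,z) p_{t-s}(z,y) dμ(z)`, and by symmetry and the sub-Markov property the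
integral of `p_{t-s}(·,y)` is at most `1`, so `p_t(x,·)` obeys the same bound.
-/

open Set Metric MeasureTheory
open scoped ENNReal

section Doubling

variable {M : Type*} [PseudoMetricSpace M] [MeasurableSpace M] {μ : Measure M} {C : ℝ≥0∞}

theorem measure_ball_two_pow_mul_le
    (hD : ∀ x : M, ∀ r : ℝ, 0 < r → μ (ball x (2 * r)) ≤ C * μ (ball x r))
    (x : M) {r : ℝ} (hr : 0 < r) (k : ℕ) :
    μ (ball x (2 ^ k * r)) ≤ C ^ k * μ (ball x r) := by
  induction k with
  | zero => simp
  | succ k ih =>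
    calc μ (ball x (2 ^ (k + 1) * r)) = μ (ball x (2 * (2 ^ k * r))) := by ring_nf
      _ ≤ C * μ (ball x (2 ^ k * r)) := hD x _ (by positivity)
      _ ≤ C * (C ^ k * μ (ball x r)) := by gcongr
      _ = C ^ (k + 1) * μ (ball x r) := by ring

theorem measure_univ_le_pow_mul_measure_ball
    (hD : ∀ x : M, ∀ r : ℝ, 0 < r → μ (ball x (2 * r)) ≤ C * μ (ball x r))
    {R : ℝ} (hdist : ∀ x y : M, dist x y ≤ R) (z : M) {r : ℝ} (hr : 0 < r) {k : ℕ}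
    (hk : R ≤ 2 ^ k * r) :
    μ univ ≤ C ^ (k + 1) * μ (ball z r) := by
  have huniv : univ ⊆ ball z (2 ^ (k + 1) * r) := fun y _ => by
    have : 2 ^ k * r < 2 ^ (k + 1) * r :=
      mul_lt_mul_of_pos_right (pow_lt_pow_right₀ one_lt_two k.lt_succ_self) hr
    exact mem_ball.2 ((hdist y z).trans_lt (hk.trans_lt this))
  exact (measure_mono huniv).trans (measure_ball_two_pow_mul_le hD z hr _)

end Doubling

theorem pos_and_le_rpow_inv_mul_of_apply_eq {W : ℝ → ℝ} {C β K R r t : ℝ} (hβ : 0 < β) (hC : 0 < C)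
    (hCK : 1 ≤ C * K) (hW0 : W 0 = 0) (ht : 0 < t) (hr : 0 ≤ r) (hWr : W r = t)
    (hscale : ∀ r, 0 < r → r ≤ R → C⁻¹ * (R / r) ^ β ≤ W R / W r) (hWR : W R ≤ K * t) :
    0 < r ∧ R ≤ (C * K) ^ β⁻¹ * r := by
  have hr : 0 < r := hr.lt_of_ne fun h => by rw [← h, hW0] at hWr; linarith
  refine ⟨hr, ?_⟩
  rcases le_or_gt R r with hRr | hrR
  · calc R ≤ 1 * r := by rwa [one_mul]
      _ ≤ (C * K) ^ β⁻¹ * r := by gcongr; exact Real.one_le_rpow hCK (inv_nonneg.2 hβ.le)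
  · have hratio : (R / r) ^ β ≤ C * K := by
      rw [← inv_mul_le_iff₀ hC]
      exact (hscale r hr hrR.le).trans ((div_le_iff₀ (hWr ▸ ht)).2 (hWr ▸ hWR))
    rw [← div_le_iff₀ hr]
    exact (Real.le_rpow_inv_iff_of_pos (div_pos (hr.trans hrR) hr).le
      (zero_le_one.trans hCK) hβ).2 hratio

theorem le_mul_ciInf_of_inv_le_div {ι : Type*} [Nonempty ι] {f : ι → ℝ} {c : ℝ} (hc : 0 < c)
    (hf : ∀ i, 0 < f i) (h : ∀ i j, c⁻¹ ≤ f j / f i) (i : ι) : f i ≤ c * ⨅ j, f j := by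
  rw [← div_le_iff₀' hc]
  refine le_ciInf fun j => ?_
  rw [div_le_iff₀' hc, ← inv_mul_le_iff₀ hc, ← le_div_iff₀ (hf i)]
  exact h i j

theorem div_rpow_half_mul_rpow_half_le {a b c v A : ℝ≥0∞} (hv0 : v ≠ 0) (hvtop : v ≠ ⊤)
    (ha : v ≤ A * a) (hb : v ≤ A * b) :
    c / (a ^ (1 / 2 : ℝ) * b ^ (1 / 2 : ℝ)) ≤ c * A / v := by
  have hsq : v / A ≤ a ^ (1 / 2 : ℝ) * b ^ (1 / 2 : ℝ) := by
    calc v / A = (v / A) ^ (1 / 2 : ℝ) * (v / A) ^ (1 / 2 : ℝ) := by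
          rw [← ENNReal.rpow_add_of_nonneg _ _ (by norm_num) (by norm_num)]; norm_num
      _ ≤ a ^ (1 / 2 : ℝ) * b ^ (1 / 2 : ℝ) := by
          gcongr
          · exact ENNReal.div_le_of_le_mul' ha
          · exact ENNReal.div_le_of_le_mul' hb
  calc c / (a ^ (1 / 2 : ℝ) * b ^ (1 / 2 : ℝ)) ≤ c / (v / A) := ENNReal.div_le_div_left hsq c
    _ = c * A / v := by
      rw [div_eq_mul_inv, ENNReal.inv_div (Or.inr hvtop) (Or.inr hv0), mul_div_assoc]

theorem le_of_forall_le_of_semigroup {M : Type*} [MeasurableSpace M] {μ : Measure M}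
    {p : ℝ → M → M → ℝ≥0∞}
    (hp_symm : ∀ t : ℝ, ∀ x y : M, p t x y = p t y x)
    (hp_semi : ∀ s t : ℝ, 0 < s → 0 < t → ∀ x y : M,
      p (s + t) x y = ∫⁻ z, p s x z * p t z y ∂μ)
    (hp_sub : ∀ t : ℝ, 0 < t → ∀ x : M, ∫⁻ y, p t x y ∂μ ≤ 1)
    {s t : ℝ} (hs : 0 < s) (hst : s < t) {x : M} {B : ℝ≥0∞} (hB : ∀ z, p s x z ≤ B) (y : M) :
    p t x y ≤ B := by
  rcases eq_or_ne B ⊤ with rfl | hBtop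
  · exact le_top
  have hts : 0 < t - s := sub_pos.2 hst
  calc p t x y = ∫⁻ z, p s x z * p (t - s) y z ∂μ := by
        rw [← add_sub_cancel s t, hp_semi s (t - s) hs hts]
        simp only [add_sub_cancel_left, hp_symm (t - s) _ y]
    _ ≤ ∫⁻ z, B * p (t - s) y z ∂μ := lintegral_mono fun z => by gcongr; exact hB z
    _ = B * ∫⁻ z, p (t - s) y z ∂μ := lintegral_const_mul' _ _ hBtop
    _ ≤ B * 1 := by gcongr; exact hp_sub _ hts y
    _ = B := mul_one B

theorem large_time_upper_bound_general {M : Type*} [MetricSpace M] [MeasurableSpace M]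
    (μ : Measure M)
    -- volume doubling with constant `C_VD ∈ (1,∞)` (in particular full support)
    (C_VD : ℝ) (hCVD : 1 < C_VD)
    (hVD : ∀ x : M, ∀ r : ℝ, 0 < r →
      0 < μ (Metric.ball x r) ∧
      μ (Metric.ball x (2 * r)) ≤ ENNReal.ofReal C_VD * μ (Metric.ball x r) ∧
      μ (Metric.ball x r) < ⊤)
    -- finite (positive) diameter `R̄ ∈ (0,∞)`
    (hdiam_pos : 0 < EMetric.diam (Set.univ : Set M))
    (hdiam_fin : EMetric.diam (Set.univ : Set M) < ⊤)
    -- `W` is a scale function with constants `C_W ≥ 1`, `0 < β₁ ≤ β₂`, with inverse `Winv`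
    (W Winv : M → ℝ → ℝ) (C_W β₁ β₂ : ℝ)
    (hCW : 1 ≤ C_W) (hβ₁ : 0 < β₁)
    (hW0 : ∀ x, W x 0 = 0)
    (hWmono : ∀ x, StrictMonoOn (W x) (Set.Ici 0))
    (hWscale : ∀ x y : M, ∀ r R : ℝ, 0 < r → r ≤ R → dist x y ≤ R →
      C_W⁻¹ * (R / r) ^ β₁ ≤ W x R / W y r ∧ W x R / W y r ≤ C_W * (R / r) ^ β₂)
    (hWinv : ∀ x : M, ∀ t : ℝ, 0 ≤ t → 0 ≤ Winv x t ∧ W x (Winv x t) = t)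
    -- the kernel `p`
    (p : ℝ → M → M → ENNReal)
    (hp_symm : ∀ t : ℝ, ∀ x y : M, p t x y = p t y x)
    (hp_semi : ∀ s t : ℝ, 0 < s → 0 < t → ∀ x y : M,
      p (s + t) x y = ∫⁻ z, p s x z * p t z y ∂μ)
    (hp_sub : ∀ t : ℝ, 0 < t → ∀ x : M, ∫⁻ y, p t x y ∂μ ≤ 1)
    -- near-diagonal upper estimate up to time `T₀ := inf_x W(x,R̄)`
    (C₀ : ℝ)
    (hp_due : ∀ x y : M, ∀ t : ℝ, 0 < t →
      t ≤ ⨅ z : M, W z (Metric.diam (Set.univ : Set M)) →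
      p t x y ≤ ENNReal.ofReal C₀ /
        ((μ (Metric.ball x (Winv x t))) ^ (1 / 2 : ℝ) *
          (μ (Metric.ball y (Winv y t))) ^ (1 / 2 : ℝ))) :
    ∃ C : ℝ, 0 < C ∧ ∀ x : M, ∀ t : ℝ,
      (⨅ z : M, W z (Metric.diam (Set.univ : Set M))) ≤ t →
      (∀ E : Set M, MeasurableSet E →
        ∫⁻ y in E, p t x y ∂μ ≤
          ENNReal.ofReal C * μ E / μ (Metric.ball x (Metric.diam (Set.univ : Set M)))) ∧
      (∀ᵐ y ∂μ, p t x y ≤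
        ENNReal.ofReal C / μ (Metric.ball x (Metric.diam (Set.univ : Set M)))) := by
  set R := diam (univ : Set M)
  have hR : 0 < R := ENNReal.toReal_pos hdiam_pos.ne' hdiam_fin.ne
  have hdist : ∀ x y : M, dist x y ≤ R := fun x y =>
    dist_le_diam_of_mem' hdiam_fin.ne (mem_univ x) (mem_univ y)
  have hCW₀ : 0 < C_W := one_pos.trans_le hCW
  have hWpos : ∀ z, 0 < W z R := fun z => hW0 z ▸ hWmono z self_mem_Ici hR.le hR
  obtain ⟨n, hn⟩ := pow_unbounded_of_one_lt ((C_W * (2 * C_W)) ^ β₁⁻¹) one_lt_two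
  obtain ⟨C, hC₀, hC⟩ : ∃ C : ℝ, 0 < C ∧
      ENNReal.ofReal C₀ * ENNReal.ofReal C_VD ^ (n + 1) ≤ ENNReal.ofReal C := by
    refine ⟨max C₀ 1 * C_VD ^ (n + 1), by positivity, ?_⟩
    rw [ENNReal.ofReal_mul (by positivity), ENNReal.ofReal_pow (by linarith)]
    gcongr
    exact le_max_left _ _
  refine ⟨C, hC₀, fun x t ht => ?_⟩
  have : Nonempty M := ⟨x⟩
  set T₀ := ⨅ z, W z R
  have hT₀ : ∀ z, W z R ≤ C_W * T₀ :=
    le_mul_ciInf_of_inv_le_div (f := (W · R)) hCW₀ hWpos fun z y => by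
      simpa [div_self hR.ne'] using (hWscale y z R R hR le_rfl (hdist y z)).1
  have hs : 0 < T₀ / 2 := by nlinarith [hT₀ x, hWpos x]
  have hrad : ∀ z, 0 < Winv z (T₀ / 2) ∧ R ≤ (C_W * (2 * C_W)) ^ β₁⁻¹ * Winv z (T₀ / 2) :=
    fun z => pos_and_le_rpow_inv_mul_of_apply_eq hβ₁ hCW₀ (by nlinarith) (hW0 z) hs (hWinv z _ hs.le).1
      (hWinv z _ hs.le).2 (fun r hr hrR => (hWscale z z r R hr hrR (by simp [hR.le])).1)
      (by linarith [hT₀ z])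
  have hvol : ∀ z, μ (ball x R) ≤ ENNReal.ofReal C_VD ^ (n + 1) * μ (ball z (Winv z (T₀ / 2))) :=
    fun z => (measure_mono (subset_univ _)).trans <|
      measure_univ_le_pow_mul_measure_ball (fun x r hr => (hVD x r hr).2.1) hdist z (hrad z).1
        ((hrad z).2.trans (mul_le_mul_of_nonneg_right hn.le (hrad z).1.le))
  obtain ⟨hVx₀, -, hVx⟩ := hVD x R hR
  have hpt : ∀ y, p t x y ≤ ENNReal.ofReal C / μ (ball x R) :=
    le_of_forall_le_of_semigroup hp_symm hp_semi hp_sub hs (by linarith) fun z =>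
      (hp_due x z _ hs (by linarith)).trans <| (div_rpow_half_mul_rpow_half_le hVx₀.ne' hVx.ne
        (hvol x) (hvol z)).trans (ENNReal.div_le_div_right hC _)
  refine ⟨fun E _ => ?_, ae_of_all _ hpt⟩
  calc ∫⁻ y in E, p t x y ∂μ ≤ ∫⁻ _ in E, ENNReal.ofReal C / μ (ball x R) ∂μ := lintegral_mono hpt
    _ = ENNReal.ofReal C * μ E / μ (ball x R) := by
      rw [setLIntegral_const, ENNReal.mul_div_right_comm]

/-- Large-time heat kernel upper bound on a bounded metric measure space:
under (VD) and the near-diagonal upper estimate up to time `T₀ = inf_x W(x,R̄)`,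
for `t ≥ T₀` one has `∫_E p_t(x,·) dμ ≤ C μ(E)/V(x,R̄)` and hence
`p_t(x,y) ≤ C/V(x,R̄)` for μ-a.e. `y`. -/
theorem large_time_upper_bound {M : Type*} [MetricSpace M] [MeasurableSpace M] [BorelSpace M]
    [Nonempty M]
    (μ : Measure M)
    -- volume doubling with constant `C_VD ∈ (1,∞)` (in particular full support)
    (C_VD : ℝ) (hCVD : 1 < C_VD)
    (hVD : ∀ x : M, ∀ r : ℝ, 0 < r →
      0 < μ (Metric.ball x r) ∧
      μ (Metric.ball x (2 * r)) ≤ ENNReal.ofReal C_VD * μ (Metric.ball x r) ∧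
      μ (Metric.ball x r) < ⊤)
    -- finite (positive) diameter `R̄ ∈ (0,∞)`
    (hdiam_pos : 0 < EMetric.diam (Set.univ : Set M))
    (hdiam_fin : EMetric.diam (Set.univ : Set M) < ⊤)
    -- `W` is a scale function with constants `C_W ≥ 1`, `0 < β₁ ≤ β₂`, with inverse `Winv`
    (W Winv : M → ℝ → ℝ) (C_W β₁ β₂ : ℝ)
    (hCW : 1 ≤ C_W) (hβ₁ : 0 < β₁) (hβ₁₂ : β₁ ≤ β₂)
    (hW0 : ∀ x, W x 0 = 0)
    (hWmono : ∀ x, StrictMonoOn (W x) (Set.Ici 0))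
    (hWsurj : ∀ x : M, ∀ y : ℝ, 0 ≤ y → ∃ r : ℝ, 0 ≤ r ∧ W x r = y)
    (hWscale : ∀ x y : M, ∀ r R : ℝ, 0 < r → r ≤ R → dist x y ≤ R →
      C_W⁻¹ * (R / r) ^ β₁ ≤ W x R / W y r ∧ W x R / W y r ≤ C_W * (R / r) ^ β₂)
    (hWinv : ∀ x : M, ∀ t : ℝ, 0 ≤ t → 0 ≤ Winv x t ∧ W x (Winv x t) = t)
    -- the kernel `p`
    (p : ℝ → M → M → ENNReal)
    (hp_meas : Measurable fun z : ℝ × M × M => p z.1 z.2.1 z.2.2)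
    (hp_fin : ∀ t : ℝ, ∀ x y : M, p t x y ≠ ⊤)
    (hp_symm : ∀ t : ℝ, ∀ x y : M, p t x y = p t y x)
    (hp_semi : ∀ s t : ℝ, 0 < s → 0 < t → ∀ x y : M,
      p (s + t) x y = ∫⁻ z, p s x z * p t z y ∂μ)
    (hp_sub : ∀ t : ℝ, 0 < t → ∀ x : M, ∫⁻ y, p t x y ∂μ ≤ 1)
    -- near-diagonal upper estimate up to time `T₀ := inf_x W(x,R̄)`
    (C₀ : ℝ)
    (hp_due : ∀ x y : M, ∀ t : ℝ, 0 < t →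
      t ≤ ⨅ z : M, W z (Metric.diam (Set.univ : Set M)) →
      p t x y ≤ ENNReal.ofReal C₀ /
        ((μ (Metric.ball x (Winv x t))) ^ (1 / 2 : ℝ) *
          (μ (Metric.ball y (Winv y t))) ^ (1 / 2 : ℝ))) :
    ∃ C : ℝ, 0 < C ∧ ∀ x : M, ∀ t : ℝ,
      (⨅ z : M, W z (Metric.diam (Set.univ : Set M))) ≤ t →
      (∀ E : Set M, MeasurableSet E →
        ∫⁻ y in E, p t x y ∂μ ≤
          ENNReal.ofReal C * μ E / μ (Metric.ball x (Metric.diam (Set.univ : Set M)))) ∧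
      (∀ᵐ y ∂μ, p t x y ≤
        ENNReal.ofReal C / μ (Metric.ball x (Metric.diam (Set.univ : Set M)))) :=
  large_time_upper_bound_general μ C_VD hCVD hVD hdiam_pos hdiam_fin W Winv C_W β₁ β₂ hCW hβ₁ hW0
    hWmono hWscale hWinv p hp_symm hp_semi hp_sub C₀ hp_due
end

section
/- Let (M,d,μ) be a metric measure space where μ has full support and satisfies the volume doubling property with constant C_VD ∈ (1,∞), and set α := log₂ C_VD. Let W be a scale function on (M,d) with constants C_W ≥ 1 and 0 < β₁ ≤ β₂. Let p : (0,∞) × M × M → [0,∞) be jointly measurable with p_t(x,y) ≤ C_UE · min( 1/V(x, W^{-1}(x,t)), t/( V(x,d(x,y)) · W(x,d(x,y)) ) ) for all t > 0 and all x,y ∈ M. Let D ⊆ M be measurable, let λ ≥ 0 and δ ∈ (0,1), and let q : (0,∞) × D × D → [0,∞) be jointly measurable such that for all t > 0 and x ∈ D: q_t(x,y) ≤ p_t(x,y) for all y ∈ D, ∫_D q_t(x,y) μ(dy) ≤ 1, and ∫_D q_t(x,y)² μ(dy) ≤ exp(−2(1−δ)tλ) · ∫_D q_{δt}(x,y)²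 μ(dy). Then for every ε ∈ (0, 2β₁/(α+2β₁)) there exists a constant C > 0, depending only on ε, δ, C_VD, C_UE, C_W, β₁ and β₂, such that ∫_D q_t(x,y) μ(dy) ≤ C · exp(−ε(1−δ)tλ) for all t > 0 and all x ∈ D. -/
/-!
Split `∫_D q_t(x,·)` at the radius `r = W⁻¹(x, t E)`, where `E = e^{ε(1-δ)tλ}`. Off the ball
`B(x,r)`, bound `q_t ≤ p_t` by the off-diagonal part of (UE) and integrate over the dyadic annuli
`B(x, 2^{k+1} r) \ B(x, 2^k r)`: (VD) and the lower scaling of `W` turn this into a geometric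
series of total size `≲ t / W(x,r) = 1/E`. On the ball, Cauchy–Schwarz and the spectral decay give
`(∫_{D∩B(x,r)} q_t)² ≤ e^{-2(1-δ)tλ} ‖q_{δt}(x,·)‖₂² V(x,r)`, and `‖q_{δt}(x,·)‖₂² ≤ C_UE / V(x,ρ)`
for `ρ = W⁻¹(x, δt)` because `∫ q_{δt}(x,·) ≤ 1`. Doubling bounds `V(x,r)/V(x,ρ)` by `(r/ρ)^α`,
which the scaling of `W` bounds by `(E/δ)^{α/β₁}`; the restriction `ε < 2β₁/(α+2β₁)` is exactly
what makes `e^{-2(1-δ)tλ} E^{α/β₁} ≤ E^{-2}`.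
-/

open Set Metric MeasureTheory Real
open scoped ENNReal

section OnDiagonal

variable {α : Type*} [MeasurableSpace α] {μ : Measure α}

theorem sq_setLIntegral_le {s : Set α} {f : α → ℝ≥0∞} (hf : AEMeasurable f (μ.restrict s)) :
    (∫⁻ y in s, f y ∂μ) ^ 2 ≤ (∫⁻ y in s, f y ^ 2 ∂μ) * μ s := by
  have h := ENNReal.lintegral_mul_le_Lp_mul_Lq (μ.restrict s) HolderConjugate.two_two hf
    (aemeasurable_const (b := 1))
  simp only [Pi.mul_apply, mul_one, lintegral_const, one_pow, one_mul,
    Measure.restrict_apply MeasurableSet.univ, univ_inter, ENNReal.rpow_two] at h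
  have hsqrt : ∀ a : ℝ≥0∞, (a ^ (1 / 2 : ℝ)) ^ 2 = a := fun a => by
    rw [← ENNReal.rpow_natCast, ← ENNReal.rpow_mul]; norm_num
  calc _ ≤ ((∫⁻ y in s, f y ^ 2 ∂μ) ^ (1 / 2 : ℝ) * μ s ^ (1 / 2 : ℝ)) ^ 2 := by gcongr
    _ = _ := by rw [mul_pow, hsqrt, hsqrt]

theorem sq_setLIntegral_inter_le_of_sq_le {D s : Set α} {f g : α → ℝ≥0∞} {b c : ℝ≥0∞}
    (hf : Measurable f) (hg : Measurable g)
    (hfg : ∫⁻ y in D, f y ^ 2 ∂μ ≤ c * ∫⁻ y in D, g y ^ 2 ∂μ)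
    (hgb : ∀ y ∈ D, g y ≤ b) (hg1 : ∫⁻ y in D, g y ∂μ ≤ 1) :
    (∫⁻ y in D ∩ s, f y ∂μ) ^ 2 ≤ c * b * μ s := by
  have hg2 : ∫⁻ y in D, g y ^ 2 ∂μ ≤ b :=
    calc ∫⁻ y in D, g y ^ 2 ∂μ ≤ ∫⁻ y in D, b * g y ∂μ :=
          setLIntegral_mono (hg.const_mul b) fun y hy => by
            rw [sq]; exact mul_le_mul_left (hgb y hy) _
      _ = b * ∫⁻ y in D, g y ∂μ := lintegral_const_mul b hg
      _ ≤ b := mul_le_of_le_one_right' hg1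
  calc (∫⁻ y in D ∩ s, f y ∂μ) ^ 2 ≤ (∫⁻ y in D ∩ s, f y ^ 2 ∂μ) * μ (D ∩ s) :=
        sq_setLIntegral_le hf.aemeasurable
    _ ≤ (∫⁻ y in D, f y ^ 2 ∂μ) * μ s := by
        gcongr
        exacts [inter_subset_left, inter_subset_right]
    _ ≤ c * b * μ s := by
        gcongr
        exact hfg.trans (by gcongr)

end OnDiagonal

theorem compl_ball_subset_iUnion_annulus {M : Type*} [MetricSpace M] (x : M) {r : ℝ} (hr : 0 < r) :
    (ball x r)ᶜ ⊆ ⋃ k : ℕ, ball x (2 * (2 ^ k * r)) \ ball x (2 ^ k * r) := by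
  intro y hy
  rw [mem_compl_iff, mem_ball, not_lt] at hy
  obtain ⟨k, hk, hk'⟩ := exists_nat_pow_near ((one_le_div hr).2 hy) one_lt_two
  refine mem_iUnion.2 ⟨k, ?_, ?_⟩
  · rw [mem_ball, ← mul_assoc, ← pow_succ']
    exact (div_lt_iff₀ hr).1 hk'
  · rw [mem_ball, not_lt]
    exact (le_div_iff₀ hr).1 hk

section MetricMeasure

variable {M : Type*} [MetricSpace M] [MeasurableSpace M]

def VolumeDoublingAt (μ : Measure M) (C : ℝ) (x : M) : Prop :=
  ∀ r : ℝ, 0 < r →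
    0 < μ (ball x r) ∧ μ (ball x (2 * r)) ≤ ENNReal.ofReal C * μ (ball x r) ∧ μ (ball x r) < ⊤

variable {μ : Measure M} {x : M}

theorem measure_ball_two_pow_mul_le_s5 {C : ℝ} (hC : 0 ≤ C)
    (hdoubling : ∀ r, 0 < r → μ (ball x (2 * r)) ≤ ENNReal.ofReal C * μ (ball x r))
    {ρ : ℝ} (hρ : 0 < ρ) (n : ℕ) :
    μ (ball x (2 ^ n * ρ)) ≤ ENNReal.ofReal (C ^ n) * μ (ball x ρ) := by
  induction n with
  | zero => simp
  | succ n ih =>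
    calc μ (ball x (2 ^ (n + 1) * ρ)) = μ (ball x (2 * (2 ^ n * ρ))) := by ring_nf
      _ ≤ ENNReal.ofReal C * μ (ball x (2 ^ n * ρ)) := hdoubling _ (by positivity)
      _ ≤ ENNReal.ofReal C * (ENNReal.ofReal (C ^ n) * μ (ball x ρ)) := by gcongr
      _ = ENNReal.ofReal (C ^ (n + 1)) * μ (ball x ρ) := by
        rw [← mul_assoc, ← ENNReal.ofReal_mul hC, pow_succ']

theorem measure_ball_le_of_doubling {C : ℝ} (hC : 1 ≤ C)
    (hdoubling : ∀ r, 0 < r → μ (ball x (2 * r)) ≤ ENNReal.ofReal C * μ (ball x r))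
    {ρ R : ℝ} (hρ : 0 < ρ) (hρR : ρ ≤ R) :
    μ (ball x R) ≤ ENNReal.ofReal (C * (R / ρ) ^ logb 2 C) * μ (ball x ρ) := by
  obtain ⟨n, hn, hn'⟩ := exists_nat_pow_near ((one_le_div hρ).2 hρR) one_lt_two
  have hpow : C ^ (n + 1) ≤ C * (R / ρ) ^ logb 2 C := by
    calc C ^ (n + 1) = C * ((2 : ℝ) ^ n) ^ logb 2 C := by
          rw [pow_succ', ← rpow_natCast_mul zero_le_two, mul_comm (n : ℝ),
            rpow_mul_natCast zero_le_two, rpow_logb two_pos (by norm_num) (by linarith)]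
      _ ≤ C * (R / ρ) ^ logb 2 C := by
          gcongr
          exact logb_nonneg one_lt_two hC
  calc μ (ball x R) ≤ μ (ball x (2 ^ (n + 1) * ρ)) :=
        measure_mono (ball_subset_ball ((div_lt_iff₀ hρ).1 hn').le)
    _ ≤ ENNReal.ofReal (C ^ (n + 1)) * μ (ball x ρ) :=
        measure_ball_two_pow_mul_le_s5 (by linarith) hdoubling hρ _
    _ ≤ _ := by gcongr

theorem setLIntegral_inter_annulus_le {C a s : ℝ} {w : ℝ → ℝ} {D : Set M} {f : M → ℝ≥0∞}
    (hμ : VolumeDoublingAt μ C x) (hC : 0 ≤ C) (hs : 0 < s) (hw : MonotoneOn w (Ici 0))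
    (hws : 0 < w s)
    (hf : ∀ y ∈ D, s ≤ dist x y →
      f y ≤ ENNReal.ofReal a / (μ (ball x (dist x y)) * ENNReal.ofReal (w (dist x y)))) :
    ∫⁻ y in D ∩ (ball x (2 * s) \ ball x s), f y ∂μ ≤ ENNReal.ofReal (C * (a / w s)) := by
  obtain ⟨h0, hdoubling, htop⟩ := hμ s hs
  have hfs : ∀ y ∈ D ∩ (ball x (2 * s) \ ball x s),
      f y ≤ ENNReal.ofReal (a / w s) / μ (ball x s) := by
    rintro y ⟨hyD, -, hy⟩
    rw [mem_ball, not_lt, dist_comm] at hy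
    calc f y ≤ ENNReal.ofReal a / (μ (ball x (dist x y)) * ENNReal.ofReal (w (dist x y))) :=
          hf y hyD hy
      _ ≤ ENNReal.ofReal a / (μ (ball x s) * ENNReal.ofReal (w s)) := by
          gcongr
          exact hw hs.le (hs.le.trans hy) hy
      _ = ENNReal.ofReal (a / w s) / μ (ball x s) := by
          rw [ENNReal.ofReal_div_of_pos hws, div_eq_mul_inv, div_eq_mul_inv, div_eq_mul_inv,
            ENNReal.mul_inv (Or.inr ENNReal.ofReal_ne_top) (Or.inl htop.ne),
            mul_comm (μ (ball x s))⁻¹, mul_assoc]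
  calc ∫⁻ y in D ∩ (ball x (2 * s) \ ball x s), f y ∂μ
      ≤ ∫⁻ _ in D ∩ (ball x (2 * s) \ ball x s), ENNReal.ofReal (a / w s) / μ (ball x s) ∂μ :=
        setLIntegral_mono measurable_const hfs
    _ = ENNReal.ofReal (a / w s) / μ (ball x s) * μ (D ∩ (ball x (2 * s) \ ball x s)) :=
        setLIntegral_const _ _
    _ ≤ ENNReal.ofReal (a / w s) / μ (ball x s) * (ENNReal.ofReal C * μ (ball x s)) := by
        gcongr
        exact (measure_mono (inter_subset_right.trans sdiff_subset)).trans hdoubling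
    _ = ENNReal.ofReal (C * (a / w s)) := by
        rw [mul_left_comm, ENNReal.div_mul_cancel h0.ne' htop.ne, ENNReal.ofReal_mul hC]

theorem setLIntegral_diff_ball_le {C_VD C_W β a r : ℝ} {w : ℝ → ℝ} {D : Set M} {f : M → ℝ≥0∞}
    (hμ : VolumeDoublingAt μ C_VD x) (hC_VD : 0 ≤ C_VD) (hC_W : 0 < C_W) (hβ : 0 < β)
    (ha : 0 ≤ a) (hr : 0 < r) (hw : MonotoneOn w (Ici 0)) (hwr : 0 < w r)
    (hw_growth : ∀ R, r ≤ R → C_W⁻¹ * (R / r) ^ β ≤ w R / w r)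
    (hf : ∀ y ∈ D, r ≤ dist x y →
      f y ≤ ENNReal.ofReal a / (μ (ball x (dist x y)) * ENNReal.ofReal (w (dist x y)))) :
    ∫⁻ y in D \ ball x r, f y ∂μ ≤
      ENNReal.ofReal (C_VD * C_W * (1 - (2 ^ β)⁻¹)⁻¹ * (a / w r)) := by
  set θ : ℝ := (2 ^ β)⁻¹
  have hθ0 : 0 ≤ θ := by positivity
  have hθ1 : θ < 1 := inv_lt_one_of_one_lt₀ (one_lt_rpow one_lt_two hβ)
  have hannulus : ∀ k : ℕ, ∫⁻ y in D ∩ (ball x (2 * (2 ^ k * r)) \ ball x (2 ^ k * r)), f y ∂μ ≤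
      ENNReal.ofReal (C_VD * C_W * (a / w r) * θ ^ k) := by
    intro k
    have hrs : r ≤ 2 ^ k * r := le_mul_of_one_le_left hr.le (one_le_pow₀ one_le_two)
    have hws : C_W⁻¹ * (2 ^ β) ^ k * w r ≤ w (2 ^ k * r) := by
      have := hw_growth _ hrs
      rwa [mul_div_cancel_right₀ _ hr.ne', ← rpow_natCast_mul zero_le_two, mul_comm (k : ℝ),
        rpow_mul_natCast zero_le_two, le_div_iff₀ hwr] at this
    have hws0 : 0 < w (2 ^ k * r) := lt_of_lt_of_le (by positivity) hws
    refine (setLIntegral_inter_annulus_le hμ hC_VD (by positivity) hw hws0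
      fun y hyD hy => hf y hyD (hrs.trans hy)).trans (ENNReal.ofReal_le_ofReal ?_)
    calc C_VD * (a / w (2 ^ k * r)) ≤ C_VD * (a / (C_W⁻¹ * (2 ^ β) ^ k * w r)) := by gcongr
      _ = C_VD * C_W * (a / w r) * θ ^ k := by
          simp only [θ, inv_pow]
          field_simp
  have hsum : Summable fun k : ℕ => C_VD * C_W * (a / w r) * θ ^ k :=
    (summable_geometric_of_lt_one hθ0 hθ1).mul_left _
  have hcover : D \ ball x r ⊆ ⋃ k : ℕ, D ∩ (ball x (2 * (2 ^ k * r)) \ ball x (2 ^ k * r)) :=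
    fun y hy => by
      obtain ⟨k, hk⟩ := mem_iUnion.1 (compl_ball_subset_iUnion_annulus x hr hy.2)
      exact mem_iUnion.2 ⟨k, hy.1, hk⟩
  calc ∫⁻ y in D \ ball x r, f y ∂μ
      ≤ ∑' k : ℕ, ∫⁻ y in D ∩ (ball x (2 * (2 ^ k * r)) \ ball x (2 ^ k * r)), f y ∂μ :=
        (lintegral_mono_set hcover).trans (lintegral_iUnion_le _ _)
    _ ≤ ∑' k : ℕ, ENNReal.ofReal (C_VD * C_W * (a / w r) * θ ^ k) :=
        ENNReal.tsum_le_tsum hannulus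
    _ = ENNReal.ofReal (C_VD * C_W * (1 - θ)⁻¹ * (a / w r)) := by
        rw [← ENNReal.ofReal_tsum_of_nonneg (fun k => by positivity) hsum, tsum_mul_left,
          tsum_geometric_of_lt_one hθ0 hθ1, mul_right_comm]

theorem sq_setLIntegral_inter_ball_le {D : Set M} {f g : M → ℝ≥0∞} {c : ℝ≥0∞} {a C ρ r : ℝ}
    (hμ : VolumeDoublingAt μ C x) (ha : 0 ≤ a) (hC : 1 ≤ C) (hρ : 0 < ρ) (hρr : ρ ≤ r)
    (hf : Measurable f) (hg : Measurable g)
    (hfg : ∫⁻ y in D, f y ^ 2 ∂μ ≤ c * ∫⁻ y in D, g y ^ 2 ∂μ)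
    (hgb : ∀ y ∈ D, g y ≤ ENNReal.ofReal a * (μ (ball x ρ))⁻¹) (hg1 : ∫⁻ y in D, g y ∂μ ≤ 1) :
    (∫⁻ y in D ∩ ball x r, f y ∂μ) ^ 2 ≤ c * ENNReal.ofReal (a * C * (r / ρ) ^ logb 2 C) := by
  obtain ⟨h0, -, htop⟩ := hμ ρ hρ
  calc (∫⁻ y in D ∩ ball x r, f y ∂μ) ^ 2
      ≤ c * (ENNReal.ofReal a * (μ (ball x ρ))⁻¹) * μ (ball x r) :=
        sq_setLIntegral_inter_le_of_sq_le hf hg hfg hgb hg1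
    _ ≤ c * (ENNReal.ofReal a * (μ (ball x ρ))⁻¹) *
          (ENNReal.ofReal (C * (r / ρ) ^ logb 2 C) * μ (ball x ρ)) := by
        gcongr
        exact measure_ball_le_of_doubling hC (fun s hs => (hμ s hs).2.1) hρ hρr
    _ = c * ENNReal.ofReal (a * C * (r / ρ) ^ logb 2 C) := by
        rw [mul_assoc c, mul_mul_mul_comm, ENNReal.inv_mul_cancel h0.ne' htop.ne, mul_one,
          ← ENNReal.ofReal_mul ha, mul_assoc]

end MetricMeasure

theorem exp_mul_rpow_le_sq_of_rpow_le {u c K α β ε L : ℝ} (hu : 0 ≤ u) (hc : 0 ≤ c) (hK : 0 ≤ K)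
    (hα : 0 ≤ α) (hβ : 0 < β) (hL : 0 ≤ L) (hε : ε < 2 * β / (α + 2 * β))
    (h : u ^ β ≤ c * exp (ε * L)) :
    exp (-2 * L) * (K * u ^ α) ≤ (√(K * c ^ (α / β)) * exp (-ε * L)) ^ 2 := by
  have hu' : u ^ α ≤ c ^ (α / β) * exp (ε * L * (α / β)) :=
    calc u ^ α = (u ^ β) ^ (α / β) := by rw [← rpow_mul hu, mul_div_cancel₀ _ hβ.ne']
      _ ≤ (c * exp (ε * L)) ^ (α / β) := by gcongr
      _ = c ^ (α / β) * exp (ε * L * (α / β)) := by rw [mul_rpow hc (exp_pos _).le, ← exp_mul]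
  have hεβ : ε * (α / β) + 2 * ε ≤ 2 := by
    rw [lt_div_iff₀ (by positivity)] at hε
    rw [mul_div_assoc', div_add' _ _ _ hβ.ne', div_le_iff₀ hβ]
    linarith
  calc exp (-2 * L) * (K * u ^ α)
      ≤ exp (-2 * L) * (K * (c ^ (α / β) * exp (ε * L * (α / β)))) := by gcongr
    _ = K * c ^ (α / β) * exp (-2 * L + ε * L * (α / β)) := by rw [exp_add]; ring
    _ ≤ K * c ^ (α / β) * exp (-ε * L + -ε * L) := by
        gcongr K * c ^ (α / β) * exp ?_
        nlinarith [mul_le_mul_of_nonneg_right hεβ hL]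
    _ = (√(K * c ^ (α / β)) * exp (-ε * L)) ^ 2 := by
        rw [mul_pow, sq_sqrt (by positivity), exp_add, sq]

theorem rightInverse_pos_le_and_rpow_div_le {w winv : ℝ → ℝ} {C β T₁ T₂ : ℝ}
    (hw0 : w 0 = 0) (hw : StrictMonoOn w (Ici 0))
    (hwinv : ∀ T, 0 ≤ T → 0 ≤ winv T ∧ w (winv T) = T)
    (hscale : ∀ r R, 0 < r → r ≤ R → C⁻¹ * (R / r) ^ β ≤ w R / w r) (hC : 0 < C)
    (hT₁ : 0 < T₁) (hT : T₁ ≤ T₂) :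
    0 < winv T₁ ∧ winv T₁ ≤ winv T₂ ∧ (winv T₂ / winv T₁) ^ β ≤ C * (T₂ / T₁) := by
  obtain ⟨h₁, hw₁⟩ := hwinv T₁ hT₁.le
  obtain ⟨h₂, hw₂⟩ := hwinv T₂ (hT₁.le.trans hT)
  have hpos : 0 < winv T₁ := by
    have := hw.lt_iff_lt self_mem_Ici h₁
    rw [hw0, hw₁] at this
    exact this.1 hT₁
  have hle : winv T₁ ≤ winv T₂ := (hw.le_iff_le h₁ h₂).1 (by rwa [hw₁, hw₂])
  refine ⟨hpos, hle, ?_⟩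
  have := hscale _ _ hpos hle
  rwa [hw₁, hw₂, inv_mul_le_iff₀ hC] at this

theorem survival_probability_upper_bound_general {M : Type*} [MetricSpace M] [MeasurableSpace M]
    (μ : Measure M)
    -- volume doubling with constant `C_VD ∈ (1,∞)` (in particular full support)
    (C_VD : ℝ) (hCVD : 1 < C_VD)
    (hVD : ∀ x : M, ∀ r : ℝ, 0 < r →
      0 < μ (Metric.ball x r) ∧
      μ (Metric.ball x (2 * r)) ≤ ENNReal.ofReal C_VD * μ (Metric.ball x r) ∧
      μ (Metric.ball x r) < ⊤)
    -- `W` is a scale function with constants `C_W ≥ 1`, `0 < β₁ ≤ β₂`, with inverse `Winv`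
    (W Winv : M → ℝ → ℝ) (C_W β₁ β₂ : ℝ)
    (hCW : 1 ≤ C_W) (hβ₁ : 0 < β₁)
    (hW0 : ∀ x, W x 0 = 0)
    (hWmono : ∀ x, StrictMonoOn (W x) (Set.Ici 0))
    (hWscale : ∀ x y : M, ∀ r R : ℝ, 0 < r → r ≤ R → dist x y ≤ R →
      C_W⁻¹ * (R / r) ^ β₁ ≤ W x R / W y r ∧ W x R / W y r ≤ C_W * (R / r) ^ β₂)
    (hWinv : ∀ x : M, ∀ t : ℝ, 0 ≤ t → 0 ≤ Winv x t ∧ W x (Winv x t) = t)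
    -- the kernel `p` with stable-like upper bound (UE)
    (p : ℝ → M → M → ENNReal)
    (C_UE : ℝ) (hCUE : 0 < C_UE)
    (hp_ue : ∀ t : ℝ, 0 < t → ∀ x y : M,
      p t x y ≤ ENNReal.ofReal C_UE *
        min (μ (Metric.ball x (Winv x t)))⁻¹
          (ENNReal.ofReal t /
            (μ (Metric.ball x (dist x y)) * ENNReal.ofReal (W x (dist x y)))))
    -- the measurable set `D`, the eigenvalue `λ ≥ 0` and `δ ∈ (0,1)`
    (D : Set M)
    (lam δ : ℝ) (hlam : 0 ≤ lam) (hδ : δ ∈ Set.Ioo (0 : ℝ) 1)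
    -- the Dirichlet kernel `q` on `D`
    (q : ℝ → M → M → ENNReal)
    (hq_meas : Measurable fun z : ℝ × M × M => q z.1 z.2.1 z.2.2)
    (hq_le : ∀ t : ℝ, 0 < t → ∀ x ∈ D, ∀ y ∈ D, q t x y ≤ p t x y)
    (hq_int : ∀ t : ℝ, 0 < t → ∀ x ∈ D, ∫⁻ y in D, q t x y ∂μ ≤ 1)
    (hq_spec : ∀ t : ℝ, 0 < t → ∀ x ∈ D,
      ∫⁻ y in D, q t x y ^ 2 ∂μ ≤
        ENNReal.ofReal (Real.exp (-2 * (1 - δ) * t * lam)) *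
          ∫⁻ y in D, q (δ * t) x y ^ 2 ∂μ) :
    ∀ ε ∈ Set.Ioo (0 : ℝ) (2 * β₁ / (Real.logb 2 C_VD + 2 * β₁)),
      ∃ C : ℝ, 0 < C ∧ ∀ t : ℝ, 0 < t → ∀ x ∈ D,
        ∫⁻ y in D, q t x y ∂μ ≤ ENNReal.ofReal (C * Real.exp (-ε * (1 - δ) * t * lam)) := by
  rintro ε ⟨hε0, hε⟩
  obtain ⟨hδ0, hδ1⟩ := hδ
  set α := logb 2 C_VD
  have hCW0 : 0 < C_W := by linarith
  set K₁ := C_VD * C_W * (1 - (2 ^ β₁)⁻¹)⁻¹ * C_UE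
  set K₂ := C_UE * C_VD * (C_W / δ) ^ (α / β₁)
  have hK₁ : 0 < K₁ := by
    have := sub_pos.2 (inv_lt_one_of_one_lt₀ (one_lt_rpow one_lt_two hβ₁)); positivity
  refine ⟨K₁ + √K₂, by positivity, fun t ht x hx => ?_⟩
  set L := (1 - δ) * t * lam
  have hL : 0 ≤ L := by have := sub_pos.2 hδ1; positivity
  rw [show -ε * (1 - δ) * t * lam = -ε * L by ring]
  have hq_slice : ∀ s, Measurable (q s x) :=
    fun s => hq_meas.comp (measurable_prodMk_left.comp measurable_prodMk_left)
  have hscale : ∀ r R, 0 < r → r ≤ R → C_W⁻¹ * (R / r) ^ β₁ ≤ W x R / W x r :=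
    fun r R hr hR => (hWscale x x r R hr hR (by rw [dist_self]; linarith)).1
  have hδt : 0 < δ * t := by positivity
  have hδtE : δ * t ≤ t * exp (ε * L) := by nlinarith [one_le_exp (by positivity : 0 ≤ ε * L)]
  obtain ⟨hρ, hρr, hratio⟩ :=
    rightInverse_pos_le_and_rpow_div_le (hW0 x) (hWmono x) (hWinv x) hscale hCW0 hδt hδtE
  set r := Winv x (t * exp (ε * L))
  set ρ := Winv x (δ * t)
  have hr : 0 < r := hρ.trans_le hρr
  have hWr : W x r = t * exp (ε * L) := (hWinv x _ (by positivity)).2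
  have hq_diag : ∀ y ∈ D, q (δ * t) x y ≤ ENNReal.ofReal C_UE * (μ (ball x ρ))⁻¹ := fun y hy =>
    (hq_le _ hδt x hx y hy).trans ((hp_ue _ hδt x y).trans (mul_le_mul_right (min_le_left _ _) _))
  have hq_far : ∀ y ∈ D, q t x y ≤
      ENNReal.ofReal (C_UE * t) / (μ (ball x (dist x y)) * ENNReal.ofReal (W x (dist x y))) := by
    intro y hy
    rw [ENNReal.ofReal_mul hCUE.le, mul_div_assoc]
    exact (hq_le t ht x hx y hy).trans
      ((hp_ue t ht x y).trans (mul_le_mul_right (min_le_right _ _) _))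
  have hfar : ∫⁻ y in D \ ball x r, q t x y ∂μ ≤ ENNReal.ofReal (K₁ * exp (-ε * L)) := by
    refine (setLIntegral_diff_ball_le (hVD x) (by linarith) hCW0 hβ₁ (by positivity) hr
      (hWmono x).monotoneOn (by rw [hWr]; positivity) (hscale r · hr)
      fun y hy _ => hq_far y hy).trans_eq ?_
    rw [hWr, neg_mul, exp_neg]
    congr 1
    simp only [K₁]
    field_simp
  have hnear :
      (∫⁻ y in D ∩ ball x r, q t x y ∂μ) ^ 2 ≤ ENNReal.ofReal (√K₂ * exp (-ε * L)) ^ 2 := by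
    have hspec := hq_spec t ht x hx
    rw [show -2 * (1 - δ) * t * lam = -2 * L by ring] at hspec
    refine (sq_setLIntegral_inter_ball_le (hVD x) hCUE.le hCVD.le hρ hρr (hq_slice t)
      (hq_slice (δ * t)) hspec hq_diag (hq_int _ hδt x hx)).trans ?_
    rw [← ENNReal.ofReal_mul (exp_pos _).le, ← ENNReal.ofReal_pow (by positivity)]
    refine ENNReal.ofReal_le_ofReal (exp_mul_rpow_le_sq_of_rpow_le (by positivity) (by positivity)
      (by positivity) (logb_nonneg one_lt_two hCVD.le) hβ₁ hL hε (hratio.trans_eq ?_))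
    field_simp
  calc ∫⁻ y in D, q t x y ∂μ
      ≤ ∫⁻ y in D ∩ ball x r, q t x y ∂μ + ∫⁻ y in D \ ball x r, q t x y ∂μ := by
        conv_lhs => rw [← inter_union_sdiff D (ball x r)]
        exact lintegral_union_le _ _ _
    _ ≤ ENNReal.ofReal (√K₂ * exp (-ε * L)) + ENNReal.ofReal (K₁ * exp (-ε * L)) :=
        add_le_add ((ENNReal.pow_le_pow_left_iff two_ne_zero).1 hnear) hfar
    _ = ENNReal.ofReal ((K₁ + √K₂) * exp (-ε * L)) := by
        rw [← ENNReal.ofReal_add (by positivity) (by positivity), add_mul, add_comm]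

/-- Survival-probability type bound: under (VD), the stable-like upper bound (UE)
for `p`, and the spectral `L²`-decay for the Dirichlet kernel `q` of an open set `D`
with eigenvalue `λ`, one gets `∫_D q_t(x,·) dμ ≤ C exp(−ε(1−δ)tλ)` for every
`ε ∈ (0, 2β₁/(α+2β₁))`, where `α = log₂ C_VD`. -/
theorem survival_probability_upper_bound {M : Type*} [MetricSpace M] [MeasurableSpace M]
    [BorelSpace M]
    (μ : Measure M)
    -- volume doubling with constant `C_VD ∈ (1,∞)` (in particular full support)
    (C_VD : ℝ) (hCVD : 1 < C_VD)
    (hVD : ∀ x : M, ∀ r : ℝ, 0 < r →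
      0 < μ (Metric.ball x r) ∧
      μ (Metric.ball x (2 * r)) ≤ ENNReal.ofReal C_VD * μ (Metric.ball x r) ∧
      μ (Metric.ball x r) < ⊤)
    -- `W` is a scale function with constants `C_W ≥ 1`, `0 < β₁ ≤ β₂`, with inverse `Winv`
    (W Winv : M → ℝ → ℝ) (C_W β₁ β₂ : ℝ)
    (hCW : 1 ≤ C_W) (hβ₁ : 0 < β₁) (hβ₁₂ : β₁ ≤ β₂)
    (hW0 : ∀ x, W x 0 = 0)
    (hWmono : ∀ x, StrictMonoOn (W x) (Set.Ici 0))
    (hWsurj : ∀ x : M, ∀ y : ℝ, 0 ≤ y → ∃ r : ℝ, 0 ≤ r ∧ W x r = y)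
    (hWscale : ∀ x y : M, ∀ r R : ℝ, 0 < r → r ≤ R → dist x y ≤ R →
      C_W⁻¹ * (R / r) ^ β₁ ≤ W x R / W y r ∧ W x R / W y r ≤ C_W * (R / r) ^ β₂)
    (hWinv : ∀ x : M, ∀ t : ℝ, 0 ≤ t → 0 ≤ Winv x t ∧ W x (Winv x t) = t)
    -- the kernel `p` with stable-like upper bound (UE)
    (p : ℝ → M → M → ENNReal)
    (hp_meas : Measurable fun z : ℝ × M × M => p z.1 z.2.1 z.2.2)
    (C_UE : ℝ) (hCUE : 0 < C_UE)
    (hp_ue : ∀ t : ℝ, 0 < t → ∀ x y : M,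
      p t x y ≤ ENNReal.ofReal C_UE *
        min (μ (Metric.ball x (Winv x t)))⁻¹
          (ENNReal.ofReal t /
            (μ (Metric.ball x (dist x y)) * ENNReal.ofReal (W x (dist x y)))))
    -- the measurable set `D`, the eigenvalue `λ ≥ 0` and `δ ∈ (0,1)`
    (D : Set M) (hD : MeasurableSet D)
    (lam δ : ℝ) (hlam : 0 ≤ lam) (hδ : δ ∈ Set.Ioo (0 : ℝ) 1)
    -- the Dirichlet kernel `q` on `D`
    (q : ℝ → M → M → ENNReal)
    (hq_meas : Measurable fun z : ℝ × M × M => q z.1 z.2.1 z.2.2)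
    (hq_le : ∀ t : ℝ, 0 < t → ∀ x ∈ D, ∀ y ∈ D, q t x y ≤ p t x y)
    (hq_int : ∀ t : ℝ, 0 < t → ∀ x ∈ D, ∫⁻ y in D, q t x y ∂μ ≤ 1)
    (hq_spec : ∀ t : ℝ, 0 < t → ∀ x ∈ D,
      ∫⁻ y in D, q t x y ^ 2 ∂μ ≤
        ENNReal.ofReal (Real.exp (-2 * (1 - δ) * t * lam)) *
          ∫⁻ y in D, q (δ * t) x y ^ 2 ∂μ) :
    ∀ ε ∈ Set.Ioo (0 : ℝ) (2 * β₁ / (Real.logb 2 C_VD + 2 * β₁)),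
      ∃ C : ℝ, 0 < C ∧ ∀ t : ℝ, 0 < t → ∀ x ∈ D,
        ∫⁻ y in D, q t x y ∂μ ≤ ENNReal.ofReal (C * Real.exp (-ε * (1 - δ) * t * lam)) :=
  survival_probability_upper_bound_general μ C_VD hCVD hVD W Winv C_W β₁ β₂ hCW hβ₁ hW0 hWmono
    hWscale hWinv p C_UE hCUE hp_ue D lam δ hlam hδ q hq_meas hq_le hq_int hq_spec
end

section
/- Let n > 0 be a real number, let 0 < s < 1, and set c₄ := √((n/2+1)/e). Then for all t > 0 and all r > 0, min( min(t^{−n/2}, t^{−n/(2s)}), t/(r^n·min(r², r^{2s})) ) ≥ (1/2) · min( min(t^{−n/2}, t^{−n/(2s)}), t^{−n/2}·exp(−c₄²·r²/t) + min(t^{−n/(2s)}, t/r^{n+2s}) ). -/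
/-!
Since `min a (b + c) ≤ min a b + min a c` for nonnegative `a, b, c`, it suffices to bound the
Gaussian term and the jump term separately by `t / (rⁿ min(r², r^{2s}))`. The jump term is at most
`t / r^{n+2s}` by definition. For the Gaussian term, `log x ≤ x / e` with `x = r²/t` gives
`x^{n/2+1} e^{-(n/2+1) x / e} ≤ 1`, i.e. `t^{-n/2} e^{-c₄² r²/t} ≤ t / r^{n+2}`.
-/

open Real

theorem Real.log_le_div_exp_one {x : ℝ} (hx : 0 < x) : log x ≤ x / exp 1 := by
  rw [log_le_iff_le_exp hx]
  simpa [mul_div_cancel₀ x (exp_ne_zero 1)] using exp_one_mul_le_exp (x := x / exp 1)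

theorem rpow_neg_mul_exp_le_div_rpow {n t r : ℝ} (hn : -2 ≤ n) (ht : 0 < t) (hr : 0 < r) :
    t ^ (-n / 2) * exp (-((n / 2 + 1) / exp 1) * r ^ (2 : ℝ) / t) ≤ t / r ^ (n + 2) := by
  have hx : 0 < r ^ (2 : ℝ) / t := by positivity
  have hlog := mul_le_mul_of_nonneg_left (log_le_div_exp_one hx)
    (show 0 ≤ n / 2 + 1 by linarith)
  rw [log_div (by positivity) ht.ne', log_rpow hr] at hlog
  rw [rpow_def_of_pos ht, ← exp_add, ← exp_log (by positivity : 0 < t / r ^ (n + 2)),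
    log_div ht.ne' (by positivity), log_rpow hr, exp_le_exp]
  have hexponent : -((n / 2 + 1) / exp 1) * r ^ (2 : ℝ) / t =
      -((n / 2 + 1) * (r ^ (2 : ℝ) / t / exp 1)) := by
    ring
  linarith

theorem min_add_le_min_add_min {α : Type*} [AddCommGroup α] [LinearOrder α]
    [IsOrderedAddMonoid α] {a b c : α} (ha : 0 ≤ a) (hb : 0 ≤ b) (hc : 0 ≤ c) :
    min a (b + c) ≤ min a b + min a c := by
  rcases le_total a b with hab | hba
  · rw [min_eq_left hab]
    exact (min_le_left _ _).trans (le_add_of_nonneg_right (le_min ha hc))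
  rcases le_total a c with hac | hca
  · rw [min_eq_left hac]
    exact (min_le_left _ _).trans (le_add_of_nonneg_left (le_min ha hb))
  · rw [min_eq_right hba, min_eq_right hca]
    exact min_le_right _ _

theorem div_rpow_add_le_div_mul_min_rpow {t r : ℝ} (ht : 0 ≤ t) (hr : 0 < r) (n p q : ℝ) :
    t / r ^ (n + p) ≤ t / (r ^ n * min (r ^ p) (r ^ q)) := by
  rw [rpow_add hr]
  gcongr
  exact min_le_left _ _

theorem stable_like_dominates_chen_kumagai_general (n s : ℝ) (hn : 0 < n) :
    ∀ t r : ℝ, 0 < t → 0 < r →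
      (1 / 2) *
          min (min (t ^ (-n / 2)) (t ^ (-n / (2 * s))))
            (t ^ (-n / 2) *
                Real.exp (-(Real.sqrt ((n / 2 + 1) / Real.exp 1)) ^ 2 * r ^ (2 : ℝ) / t) +
              min (t ^ (-n / (2 * s))) (t / r ^ (n + 2 * s))) ≤
        min (min (t ^ (-n / 2)) (t ^ (-n / (2 * s))))
          (t / (r ^ n * min (r ^ (2 : ℝ)) (r ^ (2 * s)))) := by
  intro t r ht hr
  rw [sq_sqrt (by positivity)]
  set A := min (t ^ (-n / 2)) (t ^ (-n / (2 * s)))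
  set B := t ^ (-n / 2) * exp (-((n / 2 + 1) / exp 1) * r ^ (2 : ℝ) / t)
  set C := min (t ^ (-n / (2 * s))) (t / r ^ (n + 2 * s))
  set D := t / (r ^ n * min (r ^ (2 : ℝ)) (r ^ (2 * s)))
  have hBD : B ≤ D :=
    (rpow_neg_mul_exp_le_div_rpow (by linarith) ht hr).trans
      (div_rpow_add_le_div_mul_min_rpow ht.le hr n 2 (2 * s))
  have hCD : C ≤ D :=
    (min_le_right _ _).trans <|
      (div_rpow_add_le_div_mul_min_rpow ht.le hr n (2 * s) 2).trans_eq (by rw [min_comm])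
  calc (1 / 2) * min A (B + C) ≤ (1 / 2) * (min A B + min A C) := by
        gcongr
        exact min_add_le_min_add_min (by positivity) (by positivity) (by positivity)
    _ ≤ (1 / 2) * (min A D + min A D) := by gcongr
    _ = min A D := by ring

/-- The Chen–Kumagai upper bound implies the stable-like bound: for `c₄ = √((n/2+1)/e)`,
`min(min(t^{−n/2}, t^{−n/(2s)}), t/(rⁿ·min(r², r^{2s})))` dominates half of
`min(min(t^{−n/2}, t^{−n/(2s)}), t^{−n/2}e^{−c₄²r²/t} + min(t^{−n/(2s)}, t/r^{n+2s}))`. -/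
theorem stable_like_dominates_chen_kumagai (n s : ℝ) (hn : 0 < n)
    (hs : s ∈ Set.Ioo (0 : ℝ) 1) :
    ∀ t r : ℝ, 0 < t → 0 < r →
      (1 / 2) *
          min (min (t ^ (-n / 2)) (t ^ (-n / (2 * s))))
            (t ^ (-n / 2) *
                Real.exp (-(Real.sqrt ((n / 2 + 1) / Real.exp 1)) ^ 2 * r ^ (2 : ℝ) / t) +
              min (t ^ (-n / (2 * s))) (t / r ^ (n + 2 * s))) ≤
        min (min (t ^ (-n / 2)) (t ^ (-n / (2 * s))))
          (t / (r ^ n * min (r ^ (2 : ℝ)) (r ^ (2 * s)))) :=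
  stable_like_dominates_chen_kumagai_general n s hn
end

section
/- Let n ≥ 1 be a natural number, let s ∈ (0,1) and c₀ > 0, and let p : (0,∞) × ℝⁿ × ℝⁿ → [0,∞) be a function satisfying p_t(x,y) ≥ c₀·t/|x−y|^{n+2s} for all t ∈ (0,1) and all x,y ∈ ℝⁿ with |x−y| > 1. Then for every β > 1 and all constants C > 0 and c > 0 there exist t ∈ (0,1) and x,y ∈ ℝⁿ with |x−y| > 1 such that p_t(x,y) > C·t^{−n/β}·exp(−c·(|x−y|^β/t)^{1/(β−1)}). -/
/-! For fixed `t`, the sub-Gaussian factor `exp (-c (R^β / t)^{1/(β-1)})` is at most `exp (-c R)`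
once `R ≥ 1`, so it decays faster than any power of `R = |x - y|`; the polynomial lower bound
`c₀ t / R^{n+2s}` therefore eventually beats the upper bound. -/

open Real Filter Topology

lemma le_rpow_div_rpow_one_div {R t β : ℝ} (hR : 1 ≤ R) (ht₀ : 0 < t) (ht₁ : t ≤ 1)
    (hβ : 1 < β) : R ≤ (R ^ β / t) ^ (1 / (β - 1)) := by
  have hR₀ : 0 ≤ R := zero_le_one.trans hR
  rw [one_div, le_rpow_inv_iff_of_pos hR₀ (by positivity) (by linarith)]
  calc R ^ (β - 1) ≤ R ^ β := rpow_le_rpow_of_exponent_le hR (by linarith)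
    _ ≤ R ^ β / t := le_div_self (by positivity) ht₀ ht₁

lemma tendsto_rpow_mul_exp_neg_subgaussian (a : ℝ) {c t β : ℝ} (hc : 0 < c) (ht₀ : 0 < t)
    (ht₁ : t ≤ 1) (hβ : 1 < β) :
    Tendsto (fun R => R ^ a * exp (-c * (R ^ β / t) ^ (1 / (β - 1)))) atTop (𝓝 0) := by
  refine tendsto_of_tendsto_of_tendsto_of_le_of_le' tendsto_const_nhds
    (tendsto_rpow_mul_exp_neg_mul_atTop_nhds_zero a c hc) ?_ ?_
  · filter_upwards [eventually_ge_atTop 0] with R hR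
    positivity
  · filter_upwards [eventually_ge_atTop 1] with R hR
    gcongr R ^ a * exp ?_
    exact mul_le_mul_of_nonpos_left (le_rpow_div_rpow_one_div hR ht₀ ht₁ hβ) (by linarith)

theorem no_subgaussian_upper_bound_general (n : ℕ) (hn : 1 ≤ n) (s c₀ : ℝ)
    (hc₀ : 0 < c₀)
    (p : ℝ → EuclideanSpace ℝ (Fin n) → EuclideanSpace ℝ (Fin n) → ℝ)
    (hp_low : ∀ t ∈ Set.Ioo (0 : ℝ) 1, ∀ x y : EuclideanSpace ℝ (Fin n), 1 < dist x y →
      c₀ * t / dist x y ^ ((n : ℝ) + 2 * s) ≤ p t x y) :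
    ∀ β : ℝ, 1 < β → ∀ C c : ℝ, 0 < C → 0 < c →
      ∃ t ∈ Set.Ioo (0 : ℝ) 1, ∃ x y : EuclideanSpace ℝ (Fin n), 1 < dist x y ∧
        C * t ^ (-(n : ℝ) / β) * Real.exp (-c * (dist x y ^ β / t) ^ (1 / (β - 1))) <
          p t x y := by
  intro β hβ C c hC hc
  set t : ℝ := 1 / 2
  have ht : t ∈ Set.Ioo (0 : ℝ) 1 := by norm_num [t]
  have hA : 0 < C * t ^ (-(n : ℝ) / β) := by positivity
  obtain ⟨R, hR_small, hR₁⟩ :=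
    (((tendsto_rpow_mul_exp_neg_subgaussian ((n : ℝ) + 2 * s) hc ht.1 ht.2.le hβ).eventually
      (gt_mem_nhds (by positivity : 0 < c₀ * t / (C * t ^ (-(n : ℝ) / β))))).and
      (eventually_gt_atTop 1)).exists
  have : Nonempty (Fin n) := ⟨⟨0, hn⟩⟩
  obtain ⟨x, hx⟩ := exists_norm_eq (EuclideanSpace ℝ (Fin n)) (zero_le_one.trans hR₁.le)
  have hdist : dist 0 x = R := by rw [dist_comm, dist_zero_right, hx]
  refine ⟨t, ht, 0, x, hdist ▸ hR₁, lt_of_lt_of_le ?_ (hp_low t ht 0 x (hdist ▸ hR₁))⟩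
  rw [hdist, lt_div_iff₀ (by positivity)]
  rw [lt_div_iff₀ hA] at hR_small
  linarith

/-- A kernel with a stable-like (polynomial) lower bound at large distances cannot
satisfy any sub-Gaussian upper bound
`p_t(x,y) ≤ C t^{−n/β} exp(−c(|x−y|^β/t)^{1/(β−1)})`. -/
theorem no_subgaussian_upper_bound (n : ℕ) (hn : 1 ≤ n) (s c₀ : ℝ)
    (hs : s ∈ Set.Ioo (0 : ℝ) 1) (hc₀ : 0 < c₀)
    (p : ℝ → EuclideanSpace ℝ (Fin n) → EuclideanSpace ℝ (Fin n) → ℝ)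
    (hp_nonneg : ∀ t : ℝ, ∀ x y : EuclideanSpace ℝ (Fin n), 0 ≤ p t x y)
    (hp_low : ∀ t ∈ Set.Ioo (0 : ℝ) 1, ∀ x y : EuclideanSpace ℝ (Fin n), 1 < dist x y →
      c₀ * t / dist x y ^ ((n : ℝ) + 2 * s) ≤ p t x y) :
    ∀ β : ℝ, 1 < β → ∀ C c : ℝ, 0 < C → 0 < c →
      ∃ t ∈ Set.Ioo (0 : ℝ) 1, ∃ x y : EuclideanSpace ℝ (Fin n), 1 < dist x y ∧
        C * t ^ (-(n : ℝ) / β) * Real.exp (-c * (dist x y ^ β / t) ^ (1 / (β - 1))) <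
          p t x y :=
  no_subgaussian_upper_bound_general n hn s c₀ hc₀ p hp_low
end
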